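/- arXiv:2309.12500 — 8 statements merged into one kernel-verified Lean document; each statement's English description precedes it below -/
import Mathlib

section
/- Let O be a finite set, let P, Q, R be probability mass functions on O, and let ε, ε', δ, δ' ≥ 0. If P ≈_{ε',δ'} Q and Q ≈_{ε,δ} R, then P ≈_{ε+ε', e^ε·δ' + e^{ε'}·δ} R. -/
open scoped BigOperators Classical

noncomputable section

/-- `P` is a probability mass function on a finite type. -/
def IsPMF {α : Type} [Fintype α] (P : α → ℝ) : Prop :=
  (∀ a, 0 ≤ P a) ∧ ∑ a, P a = 1

/-- The `e^ε`-hockey-stick divergence between pmfs on a finite type. -/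
def hsDiv {O : Type} [Fintype O] (ε : ℝ) (P Q : O → ℝ) : ℝ :=
  ∑ o, max (P o - Real.exp ε * Q o) 0

/-- `P ≈_{ε,δ} Q`: both hockey-stick divergences are at most `δ`. -/
def Indis {O : Type} [Fintype O] (ε δ : ℝ) (P Q : O → ℝ) : Prop :=
  hsDiv ε P Q ≤ δ ∧ hsDiv ε Q P ≤ δ

open Finset

lemma hsDiv_add_le {O : Type} [Fintype O] (ε ε' : ℝ) (P Q R : O → ℝ) :
    hsDiv (ε + ε') P R ≤ hsDiv ε' P Q + Real.exp ε' * hsDiv ε Q R := by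
  unfold hsDiv
  rw [mul_sum, ← sum_add_distrib]
  refine sum_le_sum fun o _ => ?_
  have hsplit : P o - Real.exp (ε + ε') * R o
      = (P o - Real.exp ε' * Q o) + Real.exp ε' * (Q o - Real.exp ε * R o) := by
    rw [Real.exp_add]; ring
  rw [hsplit, mul_max_of_nonneg _ _ (Real.exp_pos ε').le, mul_zero]
  simpa only [add_zero] using
    max_add_add_le_max_add_max (a := P o - Real.exp ε' * Q o) (c := 0) (d := 0)

theorem indis_triangle_general {O : Type} [Fintype O]
    (P Q R : O → ℝ)
    (ε ε' δ δ' : ℝ) (hε : 0 ≤ ε) (hε' : 0 ≤ ε') (hδ : 0 ≤ δ) (hδ' : 0 ≤ δ')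
    (h1 : Indis ε' δ' P Q) (h2 : Indis ε δ Q R) :
    Indis (ε + ε') (Real.exp ε * δ' + Real.exp ε' * δ) P R := by
  have hδ'_le : δ' ≤ Real.exp ε * δ' := le_mul_of_one_le_left hδ' (Real.one_le_exp hε)
  have hδ_le : δ ≤ Real.exp ε' * δ := le_mul_of_one_le_left hδ (Real.one_le_exp hε')
  constructor
  · calc hsDiv (ε + ε') P R ≤ hsDiv ε' P Q + Real.exp ε' * hsDiv ε Q R := hsDiv_add_le ε ε' P Q R
      _ ≤ Real.exp ε * δ' + Real.exp ε' * δ := by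
        gcongr
        exacts [h1.1.trans hδ'_le, h2.1]
  · calc hsDiv (ε + ε') R P = hsDiv (ε' + ε) R P := by rw [add_comm]
      _ ≤ hsDiv ε R Q + Real.exp ε * hsDiv ε' Q P := hsDiv_add_le ε' ε R Q P
      _ ≤ Real.exp ε' * δ + Real.exp ε * δ' := by
        gcongr
        exacts [h2.2.trans hδ_le, h1.2]
      _ = Real.exp ε * δ' + Real.exp ε' * δ := add_comm _ _

/-- "Triangle inequality" for approximate indistinguishability. -/
theorem indis_triangle {O : Type} [Fintype O]
    (P Q R : O → ℝ) (hP : IsPMF P) (hQ : IsPMF Q) (hR : IsPMF R)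
    (ε ε' δ δ' : ℝ) (hε : 0 ≤ ε) (hε' : 0 ≤ ε') (hδ : 0 ≤ δ) (hδ' : 0 ≤ δ')
    (h1 : Indis ε' δ' P Q) (h2 : Indis ε δ Q R) :
    Indis (ε + ε') (Real.exp ε * δ' + Real.exp ε' * δ) P R :=
  indis_triangle_general P Q R ε ε' δ δ' hε hε' hδ hδ' h1 h2
end
end

section
/- Let ε > 0 and μ* ≥ 0, and let Z be an integrable random variable with values in [0,∞) and mean μ = E[Z]. Then there exists a measurable function h : [0,∞) → [0,∞) such that, setting Z' := h(Z): (i) e^{−2ε}·μ* ≤ Z' ≤ e^{2ε}·μ* almost surely; (ii) E[Z'] = μ*; and (iii) E[|Z − Z'|] ≤ |μ − μ*| + 2·(1 + e^{−ε})·E[[Z − e^{ε}·Z̃]_+], where Z̃ is an independent copy of Z. -/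
/-!
Take for `h` the clamp `t ↦ max a (min t (e^{2ε} a))`. Its mean is continuous in `a`, at most `μ*`
for `a = e^{-2ε} μ*` and at least `μ*` for `a = μ*`, so the intermediate value theorem gives `a` with
mean exactly `μ*`. With `W = E[(a - Z)₊]` and `T = E[(Z - e^{2ε} a)₊]` the mean condition reads
`W - T = μ* - μ`, hence `E|Z - h(Z)| = W + T = |μ - μ*| + 2 min(W, T)`. Splitting according to whether
one of the two copies lies below `s = e^ε a`, with `p = P(Z < s)` and `D = E[(Z - e^ε Z̃)₊]`, one gets
`p T ≤ D` (from `Z̃ < s`) and `(1 - p) e^ε W ≤ D` (from `Z ≥ s`), whence `min(W, T) ≤ (1 + e^{-ε}) D`.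
-/

open MeasureTheory

lemma max_min_eq_self_add_sub {a b : ℝ} (hab : a ≤ b) (z : ℝ) :
    max a (min z b) = z + max (a - z) 0 - max (z - b) 0 := by
  rcases le_total z a with h | h
  · rw [min_eq_left (h.trans hab), max_eq_left h, max_eq_left (by linarith),
      max_eq_right (by linarith)]
    ring
  rcases le_total z b with h' | h'
  · rw [min_eq_left h', max_eq_right h, max_eq_right (by linarith), max_eq_right (by linarith)]
    ring
  · rw [min_eq_right h', max_eq_right hab, max_eq_right (by linarith), max_eq_left (by linarith)]
    ring

lemma abs_sub_max_min {a b : ℝ} (hab : a ≤ b) (z : ℝ) :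
    |z - max a (min z b)| = max (a - z) 0 + max (z - b) 0 := by
  rw [max_min_eq_self_add_sub hab]
  rcases le_total z a with h | h
  · rw [max_eq_left (a := a - z) (by linarith), max_eq_right (a := z - b) (by linarith),
      abs_of_nonpos (by linarith)]
    ring
  · rw [max_eq_right (a := a - z) (by linarith),
      abs_of_nonneg (by linarith [le_max_right (z - b) 0])]
    ring

lemma abs_max_min_sub_max_min_le (a b a' b' z : ℝ) :
    |max a (min z b) - max a' (min z b')| ≤ max |a - a'| |b - b'| := by
  refine (abs_max_sub_max_le_max _ _ _ _).trans (max_le_max le_rfl ?_)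
  simpa using abs_min_sub_min_le_max z b z b'

lemma add_eq_abs_sub_add_two_mul_min (u v : ℝ) : u + v = |u - v| + 2 * min u v := by
  rw [← min_add_max u v, abs_sub_comm, ← max_sub_min_eq_abs]
  ring

section Clamp

variable {Ω : Type*} [MeasurableSpace Ω] {μ : Measure Ω} {Z : Ω → ℝ}

lemma integrable_max_min [IsFiniteMeasure μ] (hZ : AEStronglyMeasurable Z μ) (a b : ℝ) :
    Integrable (fun ω => max a (min (Z ω) b)) μ := by
  refine Integrable.of_bound (by fun_prop) (max |a| |b|) (ae_of_all _ fun ω => ?_)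
  simpa using abs_max_min_sub_max_min_le a b 0 0 (Z ω)

lemma lipschitzWith_integral_max_min [IsProbabilityMeasure μ] (hZ : AEStronglyMeasurable Z μ) :
    LipschitzWith 1 fun q : ℝ × ℝ => ∫ ω, max q.1 (min (Z ω) q.2) ∂μ := by
  refine LipschitzWith.of_dist_le_mul fun q q' => ?_
  rw [NNReal.coe_one, one_mul, Real.dist_eq, Prod.dist_eq, Real.dist_eq, Real.dist_eq,
    ← integral_sub (integrable_max_min hZ _ _) (integrable_max_min hZ _ _)]
  simpa using norm_integral_le_of_norm_le_const (μ := μ)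
    (f := fun ω => max q.1 (min (Z ω) q.2) - max q'.1 (min (Z ω) q'.2))
    (ae_of_all _ fun ω => (Real.norm_eq_abs _).trans_le
      (abs_max_min_sub_max_min_le q.1 q.2 q'.1 q'.2 (Z ω)))

lemma integral_max_min [IsFiniteMeasure μ] (hZ : Integrable Z μ) {a b : ℝ} (hab : a ≤ b) :
    ∫ ω, max a (min (Z ω) b) ∂μ =
      ∫ ω, Z ω ∂μ + ∫ ω, max (a - Z ω) 0 ∂μ - ∫ ω, max (Z ω - b) 0 ∂μ := by
  have hlow : Integrable (fun ω => max (a - Z ω) 0) μ := ((integrable_const a).sub hZ).pos_part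
  have hupp : Integrable (fun ω => max (Z ω - b) 0) μ := (hZ.sub (integrable_const b)).pos_part
  rw [← integral_add hZ hlow,
    ← integral_sub (f := fun ω => Z ω + max (a - Z ω) 0) (hZ.add hlow) hupp]
  exact integral_congr_ae (ae_of_all _ fun ω => max_min_eq_self_add_sub hab (Z ω))

lemma integral_abs_sub_max_min [IsFiniteMeasure μ] (hZ : Integrable Z μ) {a b : ℝ} (hab : a ≤ b) :
    ∫ ω, |Z ω - max a (min (Z ω) b)| ∂μ =
      ∫ ω, max (a - Z ω) 0 ∂μ + ∫ ω, max (Z ω - b) 0 ∂μ := by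
  have hlow : Integrable (fun ω => max (a - Z ω) 0) μ := ((integrable_const a).sub hZ).pos_part
  have hupp : Integrable (fun ω => max (Z ω - b) 0) μ := (hZ.sub (integrable_const b)).pos_part
  rw [← integral_add hlow hupp]
  exact integral_congr_ae (ae_of_all _ fun ω => abs_sub_max_min hab (Z ω))

lemma exists_integral_max_min_mul_eq [IsProbabilityMeasure μ] (hZ : AEStronglyMeasurable Z μ)
    {k c : ℝ} (hk : 1 ≤ k) (hc : 0 ≤ c) :
    ∃ a ∈ Set.Icc (k⁻¹ * c) c, ∫ ω, max a (min (Z ω) (k * a)) ∂μ = c := by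
  have hk0 : 0 < k := zero_lt_one.trans_le hk
  have hcont : Continuous fun a => ∫ ω, max a (min (Z ω) (k * a)) ∂μ :=
    (lipschitzWith_integral_max_min hZ).continuous.comp (f := fun a => (a, k * a)) (by fun_prop)
  refine intermediate_value_Icc (mul_le_of_le_one_left hc (inv_le_one_of_one_le₀ hk))
    hcont.continuousOn ⟨?_, ?_⟩
  · calc ∫ ω, max (k⁻¹ * c) (min (Z ω) (k * (k⁻¹ * c))) ∂μ ≤ ∫ _ω, c ∂μ := by
          refine integral_mono (integrable_max_min hZ _ _) (integrable_const c) fun ω => ?_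
          rw [mul_inv_cancel_left₀ hk0.ne']
          exact max_le (mul_le_of_le_one_left hc (inv_le_one_of_one_le₀ hk)) (min_le_right _ _)
      _ = c := by simp
  · calc c = ∫ _ω, c ∂μ := by simp
      _ ≤ ∫ ω, max c (min (Z ω) (k * c)) ∂μ :=
          integral_mono (integrable_const c) (integrable_max_min hZ _ _) fun _ => le_max_left _ _

lemma integral_abs_sub_max_min_eq_abs_add_min [IsFiniteMeasure μ] (hZ : Integrable Z μ) {a b : ℝ}
    (hab : a ≤ b) :
    ∫ ω, |Z ω - max a (min (Z ω) b)| ∂μ =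
      |∫ ω, Z ω ∂μ - ∫ ω, max a (min (Z ω) b) ∂μ| +
        2 * min (∫ ω, max (a - Z ω) 0 ∂μ) (∫ ω, max (Z ω - b) 0 ∂μ) := by
  rw [integral_abs_sub_max_min hZ hab, integral_max_min hZ hab, add_eq_abs_sub_add_two_mul_min]
  congr 1
  rw [abs_sub_comm]
  congr 1
  ring

end Clamp

lemma integral_mul_integral_le_integral_prod {α β : Type*} [MeasurableSpace α]
    [MeasurableSpace β] {μ : Measure α} {ν : Measure β} [SFinite μ] [SFinite ν] {f : α → ℝ}
    {g : β → ℝ} {F : α × β → ℝ} (hf : 0 ≤ f) (hg : 0 ≤ g) (hF : Integrable F (μ.prod ν))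
    (hfg : ∀ x y, f x * g y ≤ F (x, y)) :
    (∫ x, f x ∂μ) * ∫ y, g y ∂ν ≤ ∫ z, F z ∂μ.prod ν := by
  rw [← integral_prod_mul]
  exact integral_mono_of_nonneg (ae_of_all _ fun _ => mul_nonneg (hf _) (hg _)) hF
    (ae_of_all _ fun z => hfg z.1 z.2)

theorem min_integral_posPart_le_integral_prod {Ω : Type*} [MeasurableSpace Ω] {μ : Measure Ω}
    [IsProbabilityMeasure μ] {Z : Ω → ℝ} (hZm : Measurable Z) (hZ : Integrable Z μ)
    {r a b : ℝ} (hr : 0 < r) (hab : r ^ 2 * a ≤ b) :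
    min (∫ ω, max (a - Z ω) 0 ∂μ) (∫ ω, max (Z ω - b) 0 ∂μ) ≤
      (1 + r⁻¹) * ∫ q, max (Z q.1 - r * Z q.2) 0 ∂(μ.prod μ) := by
  set W := ∫ ω, max (a - Z ω) 0 ∂μ
  set T := ∫ ω, max (Z ω - b) 0 ∂μ
  set D := ∫ q, max (Z q.1 - r * Z q.2) 0 ∂(μ.prod μ)
  set S := {ω | Z ω < r * a}
  have hS : MeasurableSet S := measurableSet_lt hZm measurable_const
  have hD : Integrable (fun q : Ω × Ω => max (Z q.1 - r * Z q.2) 0) (μ.prod μ) :=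
    ((hZ.comp_fst μ).sub ((hZ.comp_snd μ).const_mul r)).pos_part
  have hbelow : μ.real S * T ≤ D := by
    rw [mul_comm, ← integral_indicator_one hS]
    refine integral_mul_integral_le_integral_prod (fun _ => le_max_right _ _)
      (Set.indicator_nonneg fun _ _ => zero_le_one) hD fun x y => ?_
    by_cases hy : y ∈ S
    · rw [Set.indicator_of_mem hy, Pi.one_apply, mul_one]
      have : r * Z y ≤ b := by nlinarith [mul_lt_mul_of_pos_left (show Z y < r * a from hy) hr]
      exact max_le_max (by linarith) le_rfl
    · rw [Set.indicator_of_notMem hy, mul_zero]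
      exact le_max_right _ _
  have habove : (1 - μ.real S) * (r * W) ≤ D := by
    rw [← probReal_compl_eq_one_sub hS, ← integral_indicator_one hS.compl, ← integral_const_mul]
    refine integral_mul_integral_le_integral_prod (Set.indicator_nonneg fun _ _ => zero_le_one)
      (fun _ => mul_nonneg hr.le (le_max_right _ _)) hD fun x y => ?_
    by_cases hx : x ∈ Sᶜ
    · have : r * a ≤ Z x := not_lt.mp hx
      rw [Set.indicator_of_mem hx, Pi.one_apply, one_mul, mul_max_of_nonneg _ _ hr.le, mul_zero]
      exact max_le_max (by linarith) le_rfl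
    · rw [Set.indicator_of_notMem hx, zero_mul]
      exact le_max_right _ _
  have hp0 : 0 ≤ μ.real S := measureReal_nonneg
  have hp1 : μ.real S ≤ 1 := measureReal_le_one
  have h₁ : μ.real S * min W T ≤ D :=
    (mul_le_mul_of_nonneg_left (min_le_right W T) hp0).trans hbelow
  have h₂ : (1 - μ.real S) * min W T ≤ r⁻¹ * D := by
    rw [inv_mul_eq_div, le_div_iff₀ hr]
    nlinarith [mul_le_mul_of_nonneg_left (min_le_left W T) (sub_nonneg.mpr hp1)]
  linarith

theorem rv_correction_scalar_general {Ω : Type} [MeasurableSpace Ω]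
    (μ : Measure Ω) [IsProbabilityMeasure μ]
    (ε μs : ℝ) (hε : 0 < ε) (hμs : 0 ≤ μs)
    (Z : Ω → ℝ) (hZm : Measurable Z) (hZint : Integrable Z μ) :
    ∃ h : ℝ → ℝ, Measurable h ∧ (∀ t, 0 ≤ t → 0 ≤ h t) ∧
      (∀ᵐ ω ∂μ, Real.exp (-(2*ε)) * μs ≤ h (Z ω) ∧ h (Z ω) ≤ Real.exp (2*ε) * μs) ∧
      (∫ ω, h (Z ω) ∂μ) = μs ∧
      (∫ ω, |Z ω - h (Z ω)| ∂μ) ≤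
        |(∫ ω, Z ω ∂μ) - μs| +
          2 * (1 + Real.exp (-ε)) *
            ∫ p, max (Z p.1 - Real.exp ε * Z p.2) 0 ∂(μ.prod μ) := by
  have hk : 1 ≤ Real.exp (2 * ε) := Real.one_le_exp (by positivity)
  obtain ⟨a, ⟨hLa, haμ⟩, hmean⟩ :=
    exists_integral_max_min_mul_eq hZint.aestronglyMeasurable hk hμs
  rw [← Real.exp_neg] at hLa
  have ha0 : 0 ≤ a := (mul_nonneg (Real.exp_pos _).le hμs).trans hLa
  have hab : a ≤ Real.exp (2 * ε) * a := le_mul_of_one_le_left ha0 hk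
  have hgap := min_integral_posPart_le_integral_prod hZm hZint (Real.exp_pos ε)
    (b := Real.exp (2 * ε) * a) (by rw [← Real.exp_nat_mul, Nat.cast_ofNat])
  rw [← Real.exp_neg] at hgap
  refine ⟨fun t => max a (min t (Real.exp (2 * ε) * a)), by fun_prop,
    fun _ _ => ha0.trans (le_max_left _ _), ae_of_all _ fun _ => ⟨hLa.trans (le_max_left _ _),
      (max_le hab (min_le_right _ _)).trans (by gcongr)⟩, hmean, ?_⟩
  rw [integral_abs_sub_max_min_eq_abs_add_min hZint hab, hmean]
  linarith

/-- Scalar random variable adjustment for bounded ratio: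
a nonnegative integrable random variable `Z` can be post-processed into `Z' = h(Z)`
supported in `[e^{-2ε}μ*, e^{2ε}μ*]` with mean exactly `μ*`, moving by at most
`|μ - μ*| + 2(1 + e^{-ε})·E[[Z - e^ε·Z̃]₊]` in expectation, `Z̃` an independent copy of `Z`. -/
theorem rv_correction_scalar {Ω : Type} [MeasurableSpace Ω]
    (μ : Measure Ω) [IsProbabilityMeasure μ]
    (ε μs : ℝ) (hε : 0 < ε) (hμs : 0 ≤ μs)
    (Z : Ω → ℝ) (hZm : Measurable Z) (hZint : Integrable Z μ)
    (hZ0 : ∀ᵐ ω ∂μ, 0 ≤ Z ω) :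
    ∃ h : ℝ → ℝ, Measurable h ∧ (∀ t, 0 ≤ t → 0 ≤ h t) ∧
      (∀ᵐ ω ∂μ, Real.exp (-(2*ε)) * μs ≤ h (Z ω) ∧ h (Z ω) ≤ Real.exp (2*ε) * μs) ∧
      (∫ ω, h (Z ω) ∂μ) = μs ∧
      (∫ ω, |Z ω - h (Z ω)| ∂μ) ≤
        |(∫ ω, Z ω ∂μ) - μs| +
          2 * (1 + Real.exp (-ε)) *
            ∫ p, max (Z p.1 - Real.exp ε * Z p.2) 0 ∂(μ.prod μ) :=
  rv_correction_scalar_general μ ε μs hε hμs Z hZm hZint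
end

section
/- Let 0 < ε ≤ 1 and let Z be a random variable with E[Z] = 1 and e^{−ε} ≤ Z ≤ e^{ε} almost surely. Then −8ε² ≤ E[ln Z] ≤ 0. -/
/-!
With `t = ln z`, the gap `z - 1 - ln z = e^t - 1 - t` lies between `0` and `t²` for `|t| ≤ 1`.
Since `E[Z - 1] = 0`, integrating gives `-ε² ≤ E[ln Z] ≤ 0` whenever `|ln Z| ≤ ε ≤ 1`.
-/

open MeasureTheory Real

lemma Real.sub_one_sub_log_le_sq_log {z : ℝ} (hz : 0 < z) (h : |log z| ≤ 1) :
    z - 1 - log z ≤ log z ^ 2 := by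
  have h := abs_exp_sub_one_sub_id_le h
  rw [exp_log hz] at h
  exact (abs_le.1 h).2

lemma Real.abs_log_le_of_exp_neg_le_of_le_exp {z ε : ℝ} (h₁ : exp (-ε) ≤ z) (h₂ : z ≤ exp ε) :
    |log z| ≤ ε := by
  have hz : 0 < z := (exp_pos _).trans_le h₁
  exact abs_le.2 ⟨(le_log_iff_exp_le hz).2 h₁, (log_le_iff_le_exp hz).2 h₂⟩

section

variable {Ω : Type*} [MeasurableSpace Ω] {μ : Measure Ω} [IsProbabilityMeasure μ] {Z : Ω → ℝ}

theorem integral_log_mem_Icc_of_abs_log_le {c : ℝ} (hc : c ≤ 1) (hmean : ∫ ω, Z ω ∂μ = 1)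
    (hZ : ∀ᵐ ω ∂μ, 0 < Z ω ∧ |log (Z ω)| ≤ c) :
    -c ^ 2 ≤ ∫ ω, log (Z ω) ∂μ ∧ ∫ ω, log (Z ω) ∂μ ≤ 0 := by
  have hZint : Integrable Z μ := .of_integral_ne_zero (by simp [hmean])
  have hlogint : Integrable (fun ω ↦ log (Z ω)) μ :=
    .of_bound (measurable_log.comp_aemeasurable hZint.aemeasurable).aestronglyMeasurable c
      (hZ.mono fun _ h ↦ h.2)
  have hgap : ∫ ω, (log (Z ω) - Z ω) ∂μ = ∫ ω, log (Z ω) ∂μ - 1 := by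
    rw [integral_sub hlogint hZint, hmean]
  have hlower : ∫ _ : Ω, (-1 - c ^ 2) ∂μ ≤ ∫ ω, (log (Z ω) - Z ω) ∂μ := by
    refine integral_mono_ae (integrable_const _) (hlogint.sub hZint) ?_
    filter_upwards [hZ] with ω ⟨hpos, hlog⟩
    have hsq : log (Z ω) ^ 2 ≤ c ^ 2 := sq_le_sq' (abs_le.1 hlog).1 (abs_le.1 hlog).2
    linarith [sub_one_sub_log_le_sq_log hpos (hlog.trans hc)]
  have hupper : ∫ ω, (log (Z ω) - Z ω) ∂μ ≤ ∫ _ : Ω, (-1 : ℝ) ∂μ := by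
    refine integral_mono_ae (hlogint.sub hZint) (integrable_const _) ?_
    filter_upwards [hZ] with ω ⟨hpos, _⟩
    linarith [log_le_sub_one_of_pos hpos]
  simp only [integral_const, probReal_univ, one_smul] at hlower hupper
  constructor <;> linarith

end

theorem log_expectation_bound_general {Ω : Type} [MeasurableSpace Ω]
    (μ : Measure Ω) [IsProbabilityMeasure μ]
    (ε : ℝ) (hε1 : ε ≤ 1)
    (Z : Ω → ℝ)
    (hmean : (∫ ω, Z ω ∂μ) = 1)
    (hbound : ∀ᵐ ω ∂μ, Real.exp (-ε) ≤ Z ω ∧ Z ω ≤ Real.exp ε) :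
    -8 * ε ^ 2 ≤ (∫ ω, Real.log (Z ω) ∂μ) ∧ (∫ ω, Real.log (Z ω) ∂μ) ≤ 0 := by
  have hZ : ∀ᵐ ω ∂μ, 0 < Z ω ∧ |log (Z ω)| ≤ ε := hbound.mono fun _ h ↦
    ⟨(exp_pos _).trans_le h.1, abs_log_le_of_exp_neg_le_of_le_exp h.1 h.2⟩
  obtain ⟨hlower, hupper⟩ := integral_log_mem_Icc_of_abs_log_le hε1 hmean hZ
  exact ⟨by nlinarith [sq_nonneg ε], hupper⟩

/-- If `E[Z] = 1` and `e^{-ε} ≤ Z ≤ e^{ε}` almost surely, with `0 < ε ≤ 1`,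
then `-8ε² ≤ E[ln Z] ≤ 0`. -/
theorem log_expectation_bound {Ω : Type} [MeasurableSpace Ω]
    (μ : Measure Ω) [IsProbabilityMeasure μ]
    (ε : ℝ) (hε0 : 0 < ε) (hε1 : ε ≤ 1)
    (Z : Ω → ℝ) (hZm : Measurable Z)
    (hmean : (∫ ω, Z ω ∂μ) = 1)
    (hbound : ∀ᵐ ω ∂μ, Real.exp (-ε) ≤ Z ω ∧ Z ω ≤ Real.exp ε) :
    -8 * ε ^ 2 ≤ (∫ ω, Real.log (Z ω) ∂μ) ∧ (∫ ω, Real.log (Z ω) ∂μ) ≤ 0 :=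
  log_expectation_bound_general μ ε hε1 Z hmean hbound
end

section
/- There exist absolute constants C > 0 and c₀ > 0 such that the following holds. Let n ≥ 1 and 0 < ε ≤ c₀, 0 < δ ≤ c₀ with ε·√(n·ln(1/δ)) ≤ c₀, let μ > 0, and let Y_0, Y_1, …, Y_n be a martingale (with respect to some filtration) with values in [0,∞) such that Y_0 = μ almost surely and e^{−ε}·Y_{i−1} ≤ Y_i ≤ e^{ε}·Y_{i−1} almost surely for every i ∈ [n]. Then, for ε' = C·ε·√(n·ln(1/δ)), E[[Y_n − e^{ε'}·μ]_+ + [μ − e^{ε'}·Y_n]_+] ≤ C·μ·δ. -/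
/-!
For `s ≤ 0` or `s ≥ 1` the map `r ↦ r ^ s` is convex, so on `[e^{-ε}, e^ε]` it lies below its
chord, an affine function of `r`. Applied to `r = Y_{i+1} / Y_i`, whose conditional mean is `1`,
this gives `E[Y_{i+1}^s] ≤ cosh((s - 1/2)ε) E[Y_i^s]`, hence `E[Y_n^s] ≤ μ^s exp(nε²(s - 1/2)²/2)`.
With `ε' = 2ε√(n log(1/δ))` and `p = 4 log(1/δ) / ε'`, the pointwise bounds
`[Y - e^{ε'}μ]_+ ≤ Y^p (e^{ε'}μ)^{1-p}` and `[μ - e^{ε'}Y]_+ ≤ μ^{p+1} (e^{ε'}Y)^{-p}` turn the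
moment bounds for `s = p` and `s = -p` into the bound `μδ` for each tail.
-/

open MeasureTheory Real Set

lemma convexOn_rpow_Ioi {s : ℝ} (hs : s ≤ 0 ∨ 1 ≤ s) : ConvexOn ℝ (Ioi 0) fun x : ℝ ↦ x ^ s := by
  have hss : 0 ≤ s * (s - 1) := by rcases hs with hs | hs <;> nlinarith
  refine convexOn_of_hasDerivWithinAt2_nonneg (convex_Ioi 0)
    (f' := fun x ↦ s * x ^ (s - 1)) (f'' := fun x ↦ s * ((s - 1) * x ^ (s - 1 - 1)))
    (continuousOn_id.rpow_const fun x hx ↦ Or.inl hx.ne') ?_ ?_ ?_ <;>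
    rw [interior_Ioi] <;> intro x hx
  · exact (hasDerivAt_rpow_const (Or.inl hx.ne')).hasDerivWithinAt
  · exact ((hasDerivAt_rpow_const (Or.inl hx.ne')).const_mul s).hasDerivWithinAt
  · rw [← mul_assoc]
    exact mul_nonneg hss (rpow_nonneg hx.le _)

lemma ConvexOn.mul_le_chord {s : Set ℝ} {f : ℝ → ℝ} (hf : ConvexOn ℝ s f) {a b x : ℝ}
    (ha : a ∈ s) (hb : b ∈ s) (hx : x ∈ Icc a b) :
    (b - a) * f x ≤ (b - x) * f a + (x - a) * f b := by
  rcases hx.1.eq_or_lt with rfl | hax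
  · linarith
  rcases hx.2.eq_or_lt with rfl | hxb
  · linarith
  exact hf.secant_mono_aux1 ha hb hax hxb

lemma mul_rpow_le_chord_of_mem_Icc {a b s x y : ℝ} (hs : s ≤ 0 ∨ 1 ≤ s) (ha : 0 < a)
    (hx : 0 < x) (hy : y ∈ Icc (a * x) (b * x)) :
    (b - a) * y ^ s ≤
      ((b - 1) * a ^ s + (1 - a) * b ^ s) * x ^ s + (b ^ s - a ^ s) * (x ^ (s - 1) * (y - x)) := by
  have hr : y / x ∈ Icc a b := ⟨(le_div_iff₀ hx).2 hy.1, (div_le_iff₀ hx).2 hy.2⟩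
  have hchord := (convexOn_rpow_Ioi hs).mul_le_chord ha (ha.trans_le (hr.1.trans hr.2)) hr
  have hys : y ^ s = (y / x) ^ s * x ^ s := by
    rw [div_rpow ((mul_pos ha hx).le.trans hy.1) hx.le,
      div_mul_cancel₀ _ (rpow_pos_of_pos hx s).ne']
  have hxs : x ^ (s - 1) * (y - x) = (y / x - 1) * x ^ s := by
    rw [rpow_sub_one hx.ne']
    field_simp
  rw [hys, hxs]
  nlinarith [rpow_pos_of_pos hx s]

lemma chord_rpow_exp_le_cosh {ε : ℝ} (hε : 0 ≤ ε) (s : ℝ) :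
    (exp ε - 1) * exp (-ε) ^ s + (1 - exp (-ε)) * exp ε ^ s ≤
      (exp ε - exp (-ε)) * cosh ((s - 1 / 2) * ε) := by
  have hhalf : exp ε = exp (ε / 2) * exp (ε / 2) := by rw [← exp_add]; ring_nf
  have hchord : (exp ε - 1) * exp (-ε) ^ s + (1 - exp (-ε)) * exp ε ^ s =
      4 * sinh (ε / 2) * cosh ((s - 1 / 2) * ε) := by
    have hshift : exp (ε * s) = exp ((s - 1 / 2) * ε) * exp (ε / 2) := by
      rw [← exp_add]; ring_nf
    rw [← exp_mul, ← exp_mul, neg_mul, exp_neg, exp_neg, hshift, hhalf, sinh_eq, cosh_eq,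
      exp_neg, exp_neg]
    field_simp
    ring
  have hwidth : exp ε - exp (-ε) = 4 * sinh (ε / 2) * cosh (ε / 2) := by
    rw [exp_neg, hhalf, sinh_eq, cosh_eq, exp_neg]
    field_simp
    ring
  have hsinh : 0 ≤ sinh (ε / 2) := sinh_nonneg_iff.2 (by linarith)
  calc _ = 4 * sinh (ε / 2) * 1 * cosh ((s - 1 / 2) * ε) := by rw [hchord, mul_one]
    _ ≤ _ := by rw [hwidth]; gcongr; exact one_le_cosh _

lemma norm_rpow_le_of_mem_Icc {lo hi x : ℝ} (hlo : 0 < lo) (hx : x ∈ Icc lo hi) (t : ℝ) :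
    ‖x ^ t‖ ≤ lo ^ t + hi ^ t := by
  have hx0 : 0 < x := hlo.trans_le hx.1
  rw [norm_of_nonneg (rpow_nonneg hx0.le t)]
  rcases le_total 0 t with ht | ht
  · linarith [rpow_le_rpow hx0.le hx.2 ht, rpow_nonneg hlo.le t]
  · linarith [rpow_le_rpow_of_nonpos hlo hx.1 ht, rpow_nonneg (hx0.le.trans hx.2) t]

lemma max_sub_zero_le_rpow_mul_rpow {u v p : ℝ} (hu : 0 ≤ u) (hv : 0 < v) (hp : 1 ≤ p) :
    max (u - v) 0 ≤ u ^ p * v ^ (1 - p) := by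
  refine max_le ?_ (by positivity)
  rcases le_or_gt u v with huv | huv
  · linarith [show 0 ≤ u ^ p * v ^ (1 - p) by positivity]
  calc u - v ≤ u ^ p * u ^ (1 - p) := by
        rw [← rpow_add (hv.trans huv), add_sub_cancel, rpow_one]; linarith
    _ ≤ u ^ p * v ^ (1 - p) :=
        mul_le_mul_of_nonneg_left (rpow_le_rpow_of_nonpos hv huv.le (by linarith)) (by positivity)

lemma chernoff_exponent_le {E L σ p : ℝ} (hE : 0 < E) (hEL : E ≤ L) (hp : p * E = 4 * L)
    (hσ : 4 * σ * L = E ^ 2) :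
    E * (1 - p) + σ * (p - 1 / 2) ^ 2 / 2 ≤ -L ∧ E * -p + σ * (-p - 1 / 2) ^ 2 / 2 ≤ -L := by
  have hL : 0 < L := hE.trans_le hEL
  have hbound : E * L / 2 + E ^ 2 / 32 ≤ L ^ 2 := by nlinarith
  constructor <;> refine le_of_mul_le_mul_left ?_ hL
  · have : L * (E * (1 - p) + σ * (p - 1 / 2) ^ 2 / 2) = E * L / 2 - 2 * L ^ 2 + E ^ 2 / 32 := by
      linear_combination (-L + (p * E + 4 * L) / 8 - E / 8) * hp + ((p - 1 / 2) ^ 2 / 8) * hσ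
    nlinarith
  · have : L * (E * -p + σ * (-p - 1 / 2) ^ 2 / 2) = E * L / 2 - 2 * L ^ 2 + E ^ 2 / 32 := by
      linear_combination (-L + (p * E + 4 * L) / 8 + E / 8) * hp + ((p + 1 / 2) ^ 2 / 8) * hσ
    nlinarith

section

variable {Ω : Type*} {m0 : MeasurableSpace Ω} {μ : Measure Ω}

lemma integrable_rpow_of_ae_mem_Icc [IsFiniteMeasure μ] {X : Ω → ℝ} {lo hi : ℝ}
    (hX : AEMeasurable X μ) (hlo : 0 < lo) (hbd : ∀ᵐ ω ∂μ, X ω ∈ Icc lo hi) (t : ℝ) :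
    Integrable (fun ω ↦ X ω ^ t) μ :=
  (integrable_const (lo ^ t + hi ^ t)).mono' (hX.pow_const t).aestronglyMeasurable
    (hbd.mono fun _ hω ↦ norm_rpow_le_of_mem_Icc hlo hω t)

lemma integral_max_sub_add_max_sub_le {X : Ω → ℝ} {c a p K₁ K₂ : ℝ}
    (hX : ∀ᵐ ω ∂μ, 0 < X ω) (hc : 0 < c) (ha : 0 < a) (hp : 1 ≤ p)
    (hint₁ : Integrable (fun ω ↦ X ω ^ p) μ) (hint₂ : Integrable (fun ω ↦ X ω ^ (-p)) μ)
    (h₁ : ∫ ω, X ω ^ p ∂μ ≤ c ^ p * K₁) (h₂ : ∫ ω, X ω ^ (-p) ∂μ ≤ c ^ (-p) * K₂) :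
    ∫ ω, (max (X ω - a * c) 0 + max (c - a * X ω) 0) ∂μ ≤
      c * (a ^ (1 - p) * K₁ + a ^ (-p) * K₂) := by
  set A := (a * c) ^ (1 - p) with hA_def
  set B := c ^ (p + 1) * a ^ (-p) with hB_def
  have hpt : ∀ᵐ ω ∂μ,
      max (X ω - a * c) 0 + max (c - a * X ω) 0 ≤ A * X ω ^ p + B * X ω ^ (-p) := by
    filter_upwards [hX] with ω hω
    have hupper := max_sub_zero_le_rpow_mul_rpow hω.le (mul_pos ha hc) hp
    have hlower := max_sub_zero_le_rpow_mul_rpow hc.le (mul_pos ha hω) (by linarith : 1 ≤ p + 1)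
    rw [show 1 - (p + 1) = -p by ring, mul_rpow ha.le hω.le, ← mul_assoc] at hlower
    linarith
  have hA : A * c ^ p = c * a ^ (1 - p) := by
    rw [hA_def, mul_rpow ha.le hc.le, mul_assoc, ← rpow_add hc, sub_add_cancel, rpow_one,
      mul_comm]
  have hB : B * c ^ (-p) = c * a ^ (-p) := by
    rw [hB_def, mul_right_comm, ← rpow_add hc, show p + 1 + -p = 1 by ring, rpow_one]
  calc _ ≤ ∫ ω, (A * X ω ^ p + B * X ω ^ (-p)) ∂μ :=
        integral_mono_of_nonneg (.of_forall fun _ ↦ by positivity)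
          ((hint₁.const_mul A).add (hint₂.const_mul B)) hpt
    _ = A * ∫ ω, X ω ^ p ∂μ + B * ∫ ω, X ω ^ (-p) ∂μ := by
        rw [integral_add (hint₁.const_mul A) (hint₂.const_mul B), integral_const_mul,
          integral_const_mul]
    _ ≤ A * (c ^ p * K₁) + B * (c ^ (-p) * K₂) := by gcongr
    _ = c * (a ^ (1 - p) * K₁ + a ^ (-p) * K₂) := by
        rw [← mul_assoc, ← mul_assoc, hA, hB]; ring

lemma ae_mem_Icc_of_ae_ratio {Y : ℕ → Ω → ℝ} {c ε : ℝ} {n : ℕ} (hY0 : ∀ᵐ ω ∂μ, Y 0 ω = c)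
    (hratio : ∀ i < n, ∀ᵐ ω ∂μ, Y (i + 1) ω ∈ Icc (exp (-ε) * Y i ω) (exp ε * Y i ω)) :
    ∀ i ≤ n, ∀ᵐ ω ∂μ, Y i ω ∈ Icc (c * exp (-(i * ε))) (c * exp (i * ε)) := by
  intro i hi
  induction i with
  | zero => filter_upwards [hY0] with ω h; simp [h]
  | succ i ih =>
    filter_upwards [ih (by omega), hratio i hi] with ω ⟨hlo, hhi⟩ ⟨hl, hu⟩
    push_cast
    rw [add_mul, one_mul, neg_add, exp_add, exp_add]
    constructor <;> nlinarith [exp_pos ε, exp_pos (-ε)]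

end

namespace MeasureTheory

variable {Ω : Type*} {m0 : MeasurableSpace Ω} {μ : Measure Ω}

lemma Martingale.integral_mul_eq {ι : Type*} [Preorder ι] {ℱ : Filtration ι m0}
    [IsFiniteMeasure μ] {Y : ι → Ω → ℝ} (hY : Martingale Y ℱ μ)
    {i j : ι} (hij : i ≤ j) {g : Ω → ℝ} (hg : StronglyMeasurable[ℱ i] g)
    (hgY : Integrable (fun ω ↦ g ω * Y j ω) μ) :
    ∫ ω, g ω * Y j ω ∂μ = ∫ ω, g ω * Y i ω ∂μ :=
  calc ∫ ω, g ω * Y j ω ∂μ = ∫ ω, μ[g * Y j | ℱ i] ω ∂μ := (integral_condExp (ℱ.le i)).symm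
    _ = ∫ ω, g ω * Y i ω ∂μ := integral_congr_ae <|
        (condExp_mul_of_stronglyMeasurable_left hg hgY (hY.integrable j)).trans <|
          (hY.condExp_ae_eq hij).mono fun ω h ↦ by simp [h]

lemma Martingale.integral_rpow_succ_le [IsFiniteMeasure μ] {ℱ : Filtration ℕ m0}
    {Y : ℕ → Ω → ℝ} (hY : Martingale Y ℱ μ) {i : ℕ} {ε s lo hi : ℝ} (hε : 0 < ε)
    (hs : s ≤ 0 ∨ 1 ≤ s) (hlo : 0 < lo) (hbd : ∀ᵐ ω ∂μ, Y i ω ∈ Icc lo hi)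
    (hratio : ∀ᵐ ω ∂μ, Y (i + 1) ω ∈ Icc (exp (-ε) * Y i ω) (exp ε * Y i ω)) :
    ∫ ω, Y (i + 1) ω ^ s ∂μ ≤ cosh ((s - 1 / 2) * ε) * ∫ ω, Y i ω ^ s ∂μ := by
  set w := exp ε - exp (-ε)
  set K := (exp ε - 1) * exp (-ε) ^ s + (1 - exp (-ε)) * exp ε ^ s
  set D := exp ε ^ s - exp (-ε) ^ s
  set g : Ω → ℝ := fun ω ↦ Y i ω ^ (s - 1)
  have hw : 0 < w := sub_pos.2 (exp_lt_exp.2 (by linarith))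
  have hg : StronglyMeasurable[ℱ i] g :=
    ((hY.stronglyMeasurable i).measurable.pow_const _).stronglyMeasurable
  have hgY (j : ℕ) : Integrable (fun ω ↦ g ω * Y j ω) μ :=
    (hY.integrable j).bdd_mul (hg.mono (ℱ.le i)).aestronglyMeasurable
      (hbd.mono fun _ hω ↦ norm_rpow_le_of_mem_Icc hlo hω (s - 1))
  have hYs := integrable_rpow_of_ae_mem_Icc (hY.integrable i).aemeasurable hlo hbd s
  have hnonneg : ∀ᵐ ω ∂μ, 0 ≤ w * Y (i + 1) ω ^ s := by
    filter_upwards [hbd, hratio] with ω hb hr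
    exact mul_nonneg hw.le
      (rpow_nonneg ((mul_nonneg (exp_pos _).le (hlo.le.trans hb.1)).trans hr.1) s)
  have hpt : ∀ᵐ ω ∂μ, w * Y (i + 1) ω ^ s ≤
      K * Y i ω ^ s + D * (g ω * Y (i + 1) ω - g ω * Y i ω) := by
    filter_upwards [hbd, hratio] with ω hb hr
    rw [← mul_sub]
    exact mul_rpow_le_chord_of_mem_Icc hs (exp_pos _) (hlo.trans_le hb.1) hr
  have hdiff : Integrable (fun ω ↦ g ω * Y (i + 1) ω - g ω * Y i ω) μ := (hgY _).sub (hgY _)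
  have hmart : ∫ ω, g ω * Y (i + 1) ω ∂μ = ∫ ω, g ω * Y i ω ∂μ :=
    hY.integral_mul_eq i.le_succ hg (hgY _)
  have hint : w * ∫ ω, Y (i + 1) ω ^ s ∂μ ≤ K * ∫ ω, Y i ω ^ s ∂μ :=
    calc w * ∫ ω, Y (i + 1) ω ^ s ∂μ = ∫ ω, w * Y (i + 1) ω ^ s ∂μ :=
          (integral_const_mul _ _).symm
      _ ≤ ∫ ω, (K * Y i ω ^ s + D * (g ω * Y (i + 1) ω - g ω * Y i ω)) ∂μ :=
        integral_mono_of_nonneg hnonneg ((hYs.const_mul K).add (hdiff.const_mul D)) hpt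
      _ = K * ∫ ω, Y i ω ^ s ∂μ := by
        rw [integral_add (hYs.const_mul K) (hdiff.const_mul D), integral_const_mul,
          integral_const_mul, integral_sub (hgY _) (hgY _), hmart, sub_self, mul_zero, add_zero]
  have hmoment : 0 ≤ ∫ ω, Y i ω ^ s ∂μ :=
    integral_nonneg_of_ae (hbd.mono fun _ hω ↦ rpow_nonneg (hlo.le.trans hω.1) s)
  refine le_of_mul_le_mul_left (hint.trans ?_) hw
  rw [← mul_assoc]
  exact mul_le_mul_of_nonneg_right (chord_rpow_exp_le_cosh hε.le s) hmoment

theorem Martingale.integral_rpow_le [IsProbabilityMeasure μ] {ℱ : Filtration ℕ m0}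
    {Y : ℕ → Ω → ℝ} (hY : Martingale Y ℱ μ) {n : ℕ} {c ε s : ℝ} (hc : 0 < c) (hε : 0 < ε)
    (hs : s ≤ 0 ∨ 1 ≤ s) (hY0 : ∀ᵐ ω ∂μ, Y 0 ω = c)
    (hratio : ∀ i < n, ∀ᵐ ω ∂μ, Y (i + 1) ω ∈ Icc (exp (-ε) * Y i ω) (exp ε * Y i ω)) :
    ∫ ω, Y n ω ^ s ∂μ ≤ c ^ s * exp (n * ε ^ 2 * (s - 1 / 2) ^ 2 / 2) := by
  suffices ∀ i ≤ n, ∫ ω, Y i ω ^ s ∂μ ≤ c ^ s * exp (i * ε ^ 2 * (s - 1 / 2) ^ 2 / 2) from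
    this n le_rfl
  intro i hi
  induction i with
  | zero => simp [integral_congr_ae (hY0.mono fun ω h ↦ congrArg (· ^ s) h)]
  | succ i ih =>
    have hbd := ae_mem_Icc_of_ae_ratio hY0 hratio i (by omega)
    calc _ ≤ cosh ((s - 1 / 2) * ε) * ∫ ω, Y i ω ^ s ∂μ :=
          hY.integral_rpow_succ_le hε hs (by positivity) hbd (hratio i hi)
      _ ≤ exp (((s - 1 / 2) * ε) ^ 2 / 2) * (c ^ s * exp (i * ε ^ 2 * (s - 1 / 2) ^ 2 / 2)) :=
          mul_le_mul (cosh_le_exp_half_sq _) (ih (by omega))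
            (integral_nonneg_of_ae (hbd.mono fun _ hω ↦
              rpow_nonneg ((mul_pos hc (exp_pos _)).le.trans hω.1) s)) (exp_pos _).le
      _ = _ := by
          rw [mul_left_comm, ← exp_add]
          push_cast
          ring_nf

end MeasureTheory

/-- Concentration for nonnegative martingales with bounded ratios: if
`Y_0 = μv` and `e^{-ε}·Y_{i-1} ≤ Y_i ≤ e^{ε}·Y_{i-1}` a.s. for `i ∈ [n]`, then
the expected deviation of `Y_n` from `[e^{-ε'}μv, e^{ε'}μv]` is at most `C·μv·δ`,
where `ε' = C·ε·√(n·ln(1/δ))`. -/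
theorem concen_martingale_bounded_ratio :
    ∃ C > (0:ℝ), ∃ c₀ > (0:ℝ),
      ∀ (Ω : Type) [m0 : MeasurableSpace Ω], ∀ (μ : Measure Ω), IsProbabilityMeasure μ →
      ∀ (n : ℕ), 1 ≤ n →
      ∀ ε δ : ℝ, 0 < ε → ε ≤ c₀ → 0 < δ → δ ≤ c₀ →
        ε * Real.sqrt (n * Real.log (1 / δ)) ≤ c₀ →
      ∀ μv : ℝ, 0 < μv →
      ∀ (ℱ : Filtration ℕ m0) (Y : ℕ → Ω → ℝ),
        Martingale Y ℱ μ →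
        (∀ᵐ ω ∂μ, Y 0 ω = μv) →
        (∀ i, i ≤ n → ∀ᵐ ω ∂μ, 0 ≤ Y i ω) →
        (∀ i, 1 ≤ i → i ≤ n → ∀ᵐ ω ∂μ,
          Real.exp (-ε) * Y (i - 1) ω ≤ Y i ω ∧ Y i ω ≤ Real.exp ε * Y (i - 1) ω) →
        (∫ ω, (max (Y n ω - Real.exp (C * ε * Real.sqrt (n * Real.log (1 / δ))) * μv) 0 +
               max (μv - Real.exp (C * ε * Real.sqrt (n * Real.log (1 / δ))) * Y n ω) 0) ∂μ)
          ≤ C * μv * δ := by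
  refine ⟨2, two_pos, 1 / 4, by norm_num, ?_⟩
  intro Ω _ μ _ n hn ε δ hε _ hδ hδc hεn μv hμv ℱ Y hY hY0 _ hratio
  have hratio' : ∀ i < n, ∀ᵐ ω ∂μ, Y (i + 1) ω ∈ Icc (exp (-ε) * Y i ω) (exp ε * Y i ω) :=
    fun i hi ↦ hratio (i + 1) (by omega) hi
  have hL : 3 / 4 ≤ log (1 / δ) := by
    have := one_sub_inv_le_log_of_pos (one_div_pos.2 hδ)
    rw [inv_div, div_one] at this
    linarith
  set L := log (1 / δ)
  set E := 2 * ε * √(n * L)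
  have hnL : 0 < (n : ℝ) * L := mul_pos (by exact_mod_cast hn) (by linarith)
  have hE : 0 < E := by positivity
  set p := 4 * L / E
  have hp : 1 ≤ p := by rw [le_div_iff₀ hE]; linarith
  obtain ⟨h₁, h₂⟩ := chernoff_exponent_le (σ := n * ε ^ 2) hE (by linarith)
    (div_mul_cancel₀ (4 * L) hE.ne') (by rw [mul_pow, sq_sqrt hnL.le]; ring)
  have hbd := ae_mem_Icc_of_ae_ratio hY0 hratio' n le_rfl
  have hint := integrable_rpow_of_ae_mem_Icc (hY.integrable n).aemeasurable (by positivity) hbd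
  have hδL : exp (-L) = δ := by rw [exp_neg, exp_log (by positivity), one_div, inv_inv]
  calc _ ≤ μv * (exp E ^ (1 - p) * exp (n * ε ^ 2 * (p - 1 / 2) ^ 2 / 2) +
          exp E ^ (-p) * exp (n * ε ^ 2 * (-p - 1 / 2) ^ 2 / 2)) :=
        integral_max_sub_add_max_sub_le
          (hbd.mono fun _ hω ↦ (mul_pos hμv (exp_pos _)).trans_le hω.1) hμv (exp_pos E) hp
          (hint _) (hint _) (hY.integral_rpow_le hμv hε (.inr hp) hY0 hratio')
          (hY.integral_rpow_le hμv hε (.inl (by linarith)) hY0 hratio')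
    _ ≤ μv * (δ + δ) := by
        rw [← exp_mul, ← exp_mul, ← exp_add, ← exp_add, ← hδL]
        gcongr
    _ = 2 * μv * δ := by ring
end

section
/- Let ε ≥ 0 and let Z be an integrable random variable with values in [0,∞) and mean μ = E[Z], and let Z̃ be an independent copy of Z. Then E[|Z − clip_{e^{−ε}·μ, e^{ε}·μ}(Z)|] ≤ (1 + e^{−ε})·E[[Z − e^{ε}·Z̃]_+]. -/
open MeasureTheory

noncomputable section

/-- For `a ≤ b`, `clip_{a,b}(t) = min (max t a) b`. -/
def clip (a b t : ℝ) : ℝ := min (max t a) b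

lemma clip_abs_eq (a b x : ℝ) (h : a ≤ b) :
    |x - clip a b x| = max (x - b) 0 + max (a - x) 0 := by
  unfold clip
  rcases le_total x a with h1 | h1
  · rw [max_eq_right h1, min_eq_left h, abs_of_nonpos (by linarith),
      max_eq_right (by linarith), max_eq_left (by linarith)]
    ring
  · rw [max_eq_left h1]
    rcases le_total x b with h2 | h2
    · rw [min_eq_left h2, max_eq_right (by linarith), max_eq_right (by linarith)]
      simp
    · rw [min_eq_right h2, abs_of_nonneg (by linarith),
        max_eq_left (by linarith), max_eq_right (by linarith)]
      ring

/-- The expected distance from a nonnegative random variable `Z` to its clipping to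
`[e^{-ε}μ, e^{ε}μ]` (where `μ = E[Z]`) is at most `(1 + e^{-ε})·E[[Z - e^ε·Z̃]₊]`,
where `Z̃` is an independent copy of `Z`. -/
theorem clip_distance_bound {Ω : Type} [MeasurableSpace Ω]
    (μ : Measure Ω) [IsProbabilityMeasure μ]
    (ε : ℝ) (hε : 0 ≤ ε)
    (Z : Ω → ℝ) (hZm : Measurable Z) (hZint : Integrable Z μ)
    (hZ0 : ∀ᵐ ω ∂μ, 0 ≤ Z ω) :
    (∫ ω, |Z ω - clip (Real.exp (-ε) * ∫ ω', Z ω' ∂μ)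
        (Real.exp ε * ∫ ω', Z ω' ∂μ) (Z ω)| ∂μ)
      ≤ (1 + Real.exp (-ε)) *
          ∫ p, max (Z p.1 - Real.exp ε * Z p.2) 0 ∂(μ.prod μ) := by
  set m : ℝ := ∫ ω', Z ω' ∂μ with hm_def
  have hm : 0 ≤ m := integral_nonneg_of_ae hZ0
  have hexp : Real.exp (-ε) ≤ Real.exp ε := Real.exp_le_exp.mpr (by linarith)
  have hab : Real.exp (-ε) * m ≤ Real.exp ε * m := mul_le_mul_of_nonneg_right hexp hm
  set b : ℝ := Real.exp ε * m with hb_def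
  -- measure-preserving projections
  have hfst : MeasurePreserving (Prod.fst : Ω × Ω → Ω) (μ.prod μ) μ :=
    ⟨measurable_fst, by rw [Measure.map_fst_prod]; simp⟩
  have hsnd : MeasurePreserving (Prod.snd : Ω × Ω → Ω) (μ.prod μ) μ :=
    ⟨measurable_snd, by rw [Measure.map_snd_prod]; simp⟩
  have hZ1 : Integrable (fun p : Ω × Ω => Z p.1) (μ.prod μ) :=
    (hfst.integrable_comp hZint.aestronglyMeasurable).mpr hZint
  have hZ2 : Integrable (fun p : Ω × Ω => Z p.2) (μ.prod μ) :=
    (hsnd.integrable_comp hZint.aestronglyMeasurable).mpr hZint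
  have hF : Integrable (fun p : Ω × Ω => max (Z p.1 - Real.exp ε * Z p.2) 0) (μ.prod μ) :=
    (hZ1.sub (hZ2.const_mul _)).pos_part
  have hF' : Integrable (fun p : Ω × Ω => max (Z p.2 - Real.exp ε * Z p.1) 0) (μ.prod μ) :=
    (hZ2.sub (hZ1.const_mul _)).pos_part
  set R : ℝ := ∫ p, max (Z p.1 - Real.exp ε * Z p.2) 0 ∂(μ.prod μ) with hR_def
  have hR0 : 0 ≤ R := integral_nonneg fun p => le_max_right _ _
  -- integrabilities on μ
  have hZb : Integrable (fun ω => max (Z ω - b) 0) μ := (hZint.sub (integrable_const b)).pos_part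
  have hmZ : Integrable (fun ω => max (m - Real.exp ε * Z ω) 0) μ :=
    ((integrable_const m).sub (hZint.const_mul _)).pos_part
  -- pointwise bound on inner integrals
  have key1 : ∀ x : ℝ, max (x - b) 0 ≤ ∫ ω', max (x - Real.exp ε * Z ω') 0 ∂μ := by
    intro x
    refine max_le ?_ (integral_nonneg fun ω' => le_max_right _ _)
    have : x - b = ∫ ω', (x - Real.exp ε * Z ω') ∂μ := by
      rw [integral_sub (integrable_const x) (hZint.const_mul _), integral_const,
        integral_const_mul]
      simp [hb_def, hm_def]
    rw [this]
    exact integral_mono (integrable_const x |>.sub (hZint.const_mul _))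
      ((integrable_const x |>.sub (hZint.const_mul _)).pos_part) fun ω' => le_max_left _ _
  have key2 : ∀ x : ℝ, max (m - Real.exp ε * x) 0 ≤ ∫ ω', max (Z ω' - Real.exp ε * x) 0 ∂μ := by
    intro x
    refine max_le ?_ (integral_nonneg fun ω' => le_max_right _ _)
    have : m - Real.exp ε * x = ∫ ω', (Z ω' - Real.exp ε * x) ∂μ := by
      rw [integral_sub hZint (integrable_const _), integral_const]
      simp [hm_def]
    rw [this]
    exact integral_mono (hZint.sub (integrable_const _))
      ((hZint.sub (integrable_const _)).pos_part) fun ω' => le_max_left _ _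
  -- first bound
  have bound1 : ∫ ω, max (Z ω - b) 0 ∂μ ≤ R := by
    have h1 : ∫ ω, max (Z ω - b) 0 ∂μ
        ≤ ∫ ω, (∫ ω', max (Z ω - Real.exp ε * Z ω') 0 ∂μ) ∂μ :=
      integral_mono hZb hF.integral_prod_left (fun ω => key1 (Z ω))
    have h2 : ∫ ω, (∫ ω', max (Z ω - Real.exp ε * Z ω') 0 ∂μ) ∂μ = R := by
      rw [hR_def, ← integral_prod _ hF]
    linarith
  -- second bound
  have bound2 : ∫ ω, max (m - Real.exp ε * Z ω) 0 ∂μ ≤ R := by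
    have h1 : ∫ ω, max (m - Real.exp ε * Z ω) 0 ∂μ
        ≤ ∫ ω, (∫ ω', max (Z ω' - Real.exp ε * Z ω) 0 ∂μ) ∂μ :=
      integral_mono hmZ hF'.integral_prod_left (fun ω => key2 (Z ω))
    have h2 : ∫ ω, (∫ ω', max (Z ω' - Real.exp ε * Z ω) 0 ∂μ) ∂μ = R := by
      rw [← integral_prod _ hF', hR_def,
        ← integral_prod_swap (fun p : Ω × Ω => max (Z p.1 - Real.exp ε * Z p.2) 0)]
      rfl
    linarith
  -- rewrite LHS
  have hLHS : (∫ ω, |Z ω - clip (Real.exp (-ε) * m) (Real.exp ε * m) (Z ω)| ∂μ)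
      = (∫ ω, max (Z ω - b) 0 ∂μ)
        + Real.exp (-ε) * ∫ ω, max (m - Real.exp ε * Z ω) 0 ∂μ := by
    have heq : ∀ ω, |Z ω - clip (Real.exp (-ε) * m) (Real.exp ε * m) (Z ω)|
        = max (Z ω - b) 0 + Real.exp (-ε) * max (m - Real.exp ε * Z ω) 0 := by
      intro ω
      rw [clip_abs_eq _ _ _ hab]
      congr 1
      have h3 : Real.exp (-ε) * m - Z ω = Real.exp (-ε) * (m - Real.exp ε * Z ω) := by
        rw [mul_sub, ← mul_assoc, ← Real.exp_add]
        simp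
      rw [h3, mul_max_of_nonneg _ _ (Real.exp_nonneg (-ε)), mul_zero]
    simp_rw [heq]
    rw [integral_add hZb (hmZ.const_mul _), integral_const_mul]
  rw [hLHS]
  have hexp0 : 0 ≤ Real.exp (-ε) := Real.exp_nonneg _
  nlinarith [mul_le_mul_of_nonneg_left bound2 hexp0]
end
end

section
/- There exists an absolute constant κ > 0 such that the following holds. Let X be a nonempty finite set, Z = X × {0,1}, let H be a nonempty finite set of hypotheses h : X → {0,1}, let α ∈ (0, 1/2], and let n, m ≥ 1 satisfy α·m ≤ 1 and α·n·m ≥ κ·(1 + ln|H|). Then for every probability distribution D on Z, with probability at least 0.9 over z ∼ D^{n·m} (viewed as n users each holding a block of m i.i.d. labeled examples), the following hold simultaneously for every h ∈ H: (i) if Err_D(h) ≤ 0.01·α then scr_h(z) ≤ 0.05·α·n·m; and (ii) if Err_D(h) > α then scr_h(z) > 0.1·α·n·m. -/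
open scoped BigOperators Classical

noncomputable section

/-- `Err_D(h) = Pr_{(x,y)∼D}[h(x) ≠ y]`. -/
def errD {X : Type} [Fintype X] (D : X × Bool → ℝ) (h : X → Bool) : ℝ :=
  ∑ z : X × Bool, if h z.1 ≠ z.2 then D z else 0

/-- `scr_h(z)`: the number of user blocks of `z` that are not realizable by `h`. -/
def scr {X : Type} {n m : ℕ} (h : X → Bool) (z : Fin n → Fin m → X × Bool) : ℕ :=
  (Finset.univ.filter fun i : Fin n => ¬ ∀ j, h (z i j).1 = (z i j).2).card

/-!
For a fixed `h` the `n` blocks are independent and each is non-realizable with probability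
`p = 1 - (1 - Err_D(h))^m`, so `scr_h` is binomial and
`E[c^scr_h] = (1 + (c - 1) p)^n ≤ exp (n (c - 1) p)`. If `Err_D(h) ≤ α/100` then `p ≤ α m/100` by
Bernoulli's inequality, and if `Err_D(h) > α` then `p ≥ α m/2` because `α m ≤ 1`. Chernoff bounds
with `c = e` and `c = e⁻¹` bound the failure probability for each `h` by `exp (-0.03 α n m)`, and
with `κ = 1000` the union bound over `H` gives at most `|H| exp (-30 (1 + log |H|)) ≤ 0.1`.
-/

open Finset Real

section Weighted

variable {ι : Type*} [Fintype ι]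

theorem sum_mul_ite_le_exp_neg_mul_sum_mul_exp (w f : ι → ℝ) (hw : ∀ i, 0 ≤ w i)
    (p : ι → Prop) [DecidablePred p] {a : ℝ} (hp : ∀ i, p i → a ≤ f i) :
    ∑ i, w i * (if p i then 1 else 0) ≤ exp (-a) * ∑ i, w i * exp (f i) := by
  rw [mul_sum]
  refine sum_le_sum fun i _ => ?_
  split_ifs with hi
  · have : 1 ≤ exp (-a) * exp (f i) := by
      rw [← exp_add]; exact one_le_exp (by linarith [hp i hi])
    nlinarith [hw i]
  · rw [mul_zero]; have := hw i; positivity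

theorem sum_sub_sum_sum_mul_ite_not_le_sum_mul_ite_forall {κ : Type*} (s : Finset κ)
    (w : ι → ℝ) (hw : ∀ i, 0 ≤ w i) (P : κ → ι → Prop) [∀ k i, Decidable (P k i)]
    [∀ i, Decidable (∀ k ∈ s, P k i)] :
    ∑ i, w i - ∑ k ∈ s, ∑ i, w i * (if ¬ P k i then 1 else 0)
      ≤ ∑ i, w i * (if ∀ k ∈ s, P k i then 1 else 0) := by
  rw [sum_comm, ← sum_sub_distrib]
  refine sum_le_sum fun i _ => ?_
  by_cases hall : ∀ k ∈ s, P k i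
  · rw [if_pos hall, mul_one, sum_eq_zero fun k hk => by simp [hall k hk], sub_zero]
  · obtain ⟨k, hk, hPk⟩ := not_forall₂.1 hall
    have hterm : ∀ k ∈ s, 0 ≤ w i * (if ¬ P k i then 1 else 0) := fun k _ => by
      have := hw i; positivity
    have := single_le_sum hterm hk
    simp only [hPk, hall, not_false_eq_true, if_true, if_false, mul_one, mul_zero] at this ⊢
    linarith

end Weighted

theorem one_add_pow_le_exp_mul {x : ℝ} (hx : 0 ≤ 1 + x) (n : ℕ) :
    (1 + x) ^ n ≤ exp (n * x) := by
  rw [exp_nat_mul]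
  exact pow_le_pow_left₀ hx (by linarith [add_one_le_exp x]) n

theorem exp_neg_le_one_sub_half {x : ℝ} (hx0 : 0 ≤ x) (hx1 : x ≤ 1) :
    exp (-x) ≤ 1 - x / 2 := by
  rw [exp_neg, inv_le_comm₀ (exp_pos x) (by linarith), ← one_div,
    div_le_iff₀ (by linarith)]
  nlinarith [add_one_le_exp x]

theorem IsPMF.pi {α : Type} [Fintype α] {P : α → ℝ} (hP : IsPMF P) (k : ℕ) :
    IsPMF fun b : Fin k → α => ∏ j, P (b j) :=
  ⟨fun b => prod_nonneg fun j _ => hP.1 (b j), by rw [← Fintype.sum_pow, hP.2, one_pow]⟩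

section Sample

variable {X : Type} [Fintype X] {D : X × Bool → ℝ}

theorem errD_nonneg (hD : IsPMF D) (h : X → Bool) : 0 ≤ errD D h :=
  sum_nonneg fun x _ => by split_ifs <;> simp [hD.1 x]

theorem sum_mul_ite_eq_one_sub_errD (hD : IsPMF D) (h : X → Bool) :
    ∑ x, D x * (if h x.1 = x.2 then 1 else 0) = 1 - errD D h := by
  conv_rhs => rw [← hD.2, errD, ← sum_sub_distrib]
  exact sum_congr rfl fun x _ => by by_cases hx : h x.1 = x.2 <;> simp [hx]

theorem errD_le_one (hD : IsPMF D) (h : X → Bool) : errD D h ≤ 1 := by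
  have := sum_mul_ite_eq_one_sub_errD hD h
  have : 0 ≤ ∑ x, D x * (if h x.1 = x.2 then 1 else 0) :=
    sum_nonneg fun x _ => mul_nonneg (hD.1 x) (by split_ifs <;> norm_num)
  linarith

/-- The probability that a block of `m` i.i.d. samples from `D` is not realizable by `h`. -/
def blockErr (D : X × Bool → ℝ) (h : X → Bool) (m : ℕ) : ℝ :=
  1 - (1 - errD D h) ^ m

variable (hD : IsPMF D) (h : X → Bool)
include hD

theorem blockErr_nonneg (m : ℕ) : 0 ≤ blockErr D h m := by
  have := errD_nonneg hD h
  have := errD_le_one hD h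
  rw [blockErr, sub_nonneg]
  exact pow_le_one₀ (by linarith) (by linarith)

theorem blockErr_le_one (m : ℕ) : blockErr D h m ≤ 1 := by
  have := errD_le_one hD h
  rw [blockErr, sub_le_self_iff]
  exact pow_nonneg (by linarith) m

theorem blockErr_le_mul_errD (m : ℕ) : blockErr D h m ≤ m * errD D h := by
  have := errD_le_one hD h
  have := one_add_mul_le_pow (show (-2 : ℝ) ≤ -errD D h by linarith) m
  rw [blockErr, ← sub_eq_add_neg] at *
  linarith

theorem mul_div_two_le_blockErr {α : ℝ} (hα : 0 ≤ α) (hαe : α ≤ errD D h) {m : ℕ}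
    (hαm : α * m ≤ 1) : α * m / 2 ≤ blockErr D h m := by
  have := errD_le_one hD h
  have : (1 - errD D h) ^ m ≤ exp (-(α * m)) := calc
    (1 - errD D h) ^ m ≤ exp (-α) ^ m :=
      pow_le_pow_left₀ (by linarith) (by linarith [add_one_le_exp (-α)]) m
    _ = exp (-(α * m)) := by rw [← exp_nat_mul]; ring_nf
  have := exp_neg_le_one_sub_half (by positivity) hαm
  rw [blockErr]
  linarith

theorem sum_prod_mul_ite_realizable (m : ℕ) (c : ℝ) :
    ∑ b : Fin m → X × Bool, (∏ j, D (b j)) * (if ∀ j, h (b j).1 = (b j).2 then 1 else c)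
      = 1 + (c - 1) * blockErr D h m := by
  have hsplit : ∀ b : Fin m → X × Bool,
      (∏ j, D (b j)) * (if ∀ j, h (b j).1 = (b j).2 then 1 else c)
        = c * ∏ j, D (b j)
          + (1 - c) * ∏ j, D (b j) * (if h (b j).1 = (b j).2 then 1 else 0) := by
    intro b
    rw [prod_mul_distrib, prod_boole]
    split_ifs <;> simp_all <;> ring
  simp_rw [hsplit]
  rw [sum_add_distrib, ← mul_sum, ← mul_sum, (hD.pi m).2,
    ← Fintype.sum_pow (fun x => D x * if h x.1 = x.2 then 1 else 0),
    sum_mul_ite_eq_one_sub_errD hD, blockErr]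
  ring

theorem sum_mul_pow_scr (n m : ℕ) (c : ℝ) :
    ∑ z : Fin n → Fin m → X × Bool, (∏ i, ∏ j, D (z i j)) * c ^ scr h z
      = (1 + (c - 1) * blockErr D h m) ^ n := by
  have hpow : ∀ z : Fin n → Fin m → X × Bool,
      c ^ scr h z = ∏ i, if ∀ j, h (z i j).1 = (z i j).2 then 1 else c := by
    intro z
    rw [scr, ← prod_const, prod_filter]
    exact prod_congr rfl fun i _ => by split_ifs <;> simp_all
  simp_rw [hpow, ← prod_mul_distrib]
  rw [← Fintype.sum_pow (fun b : Fin m → X × Bool =>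
    (∏ j, D (b j)) * if ∀ j, h (b j).1 = (b j).2 then 1 else c), sum_prod_mul_ite_realizable hD]

theorem sum_mul_ite_le_exp_of_le_mul_scr {n m : ℕ} (P : (Fin n → Fin m → X × Bool) → Prop)
    [DecidablePred P] {t a : ℝ} (hP : ∀ z, P z → a ≤ scr h z * t) :
    ∑ z, (∏ i, ∏ j, D (z i j)) * (if P z then 1 else 0)
      ≤ exp (-a + n * ((exp t - 1) * blockErr D h m)) := by
  refine (sum_mul_ite_le_exp_neg_mul_sum_mul_exp _ _ ((hD.pi m).pi n).1 P hP).trans ?_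
  simp_rw [exp_nat_mul, sum_mul_pow_scr hD, exp_add]
  have := blockErr_nonneg hD h m
  have := blockErr_le_one hD h m
  gcongr
  refine one_add_pow_le_exp_mul ?_ n
  nlinarith [exp_pos t]

theorem sum_mul_ite_not_separated_le {α : ℝ} (hα : 0 < α) {n m : ℕ} (hαm : α * m ≤ 1) :
    ∑ z : Fin n → Fin m → X × Bool, (∏ i, ∏ j, D (z i j)) *
      (if ¬ ((errD D h ≤ 0.01 * α → (scr h z : ℝ) ≤ 0.05 * α * n * m) ∧
             (errD D h > α → (scr h z : ℝ) > 0.1 * α * n * m)) then 1 else 0)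
      ≤ exp (-(0.03 * (α * n * m))) := by
  have hn : (0 : ℝ) ≤ n := n.cast_nonneg
  have hnm : 0 ≤ α * n * m := by positivity
  have hp0 := blockErr_nonneg hD h m
  rcases le_or_gt (errD D h) (0.01 * α) with hlow | hlow
  · have hnot : ¬ errD D h > α := by linarith
    refine (sum_mul_ite_le_exp_of_le_mul_scr hD h _ (t := 1) (a := 0.05 * α * n * m)
      fun z hz => ?_).trans (exp_le_exp.2 ?_)
    · have : ¬ (scr h z : ℝ) ≤ 0.05 * α * n * m :=
        fun hle => hz ⟨fun _ => hle, fun hgt => absurd hgt hnot⟩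
      linarith
    · have hp : (exp 1 - 1) * blockErr D h m ≤ 0.0172 * (α * m) := by
        nlinarith [blockErr_le_mul_errD hD h m, exp_one_lt_d9]
      linarith [mul_le_mul_of_nonneg_left hp hn]
  rcases le_or_gt (errD D h) α with hmid | hhigh
  · refine le_of_eq_of_le (sum_eq_zero fun z _ => ?_) (exp_pos _).le
    rw [if_neg (not_not_intro ⟨fun h' => absurd h' (not_le.2 hlow),
      fun h' => absurd h' (not_lt.2 hmid)⟩), mul_zero]
  · have hnot : ¬ errD D h ≤ 0.01 * α := by linarith
    refine (sum_mul_ite_le_exp_of_le_mul_scr hD h _ (t := -1) (a := -(0.1 * α * n * m))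
      fun z hz => ?_).trans (exp_le_exp.2 ?_)
    · have : ¬ (scr h z : ℝ) > 0.1 * α * n * m :=
        fun hgt => hz ⟨fun hle => absurd hle hnot, fun _ => hgt⟩
      linarith
    · have hp : (exp (-1) - 1) * blockErr D h m ≤ -(0.3 * (α * m)) := by
        nlinarith [mul_div_two_le_blockErr hD h hα.le hhigh.le hαm, exp_neg_one_lt_d9]
      linarith [mul_le_mul_of_nonneg_left hp hn]

end Sample

theorem mul_exp_neg_le_one_tenth {N A : ℝ} (hN : 1 ≤ N) (hA : 1000 * (1 + log N) ≤ A) :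
    N * exp (-(0.03 * A)) ≤ 0.1 := by
  have := log_nonneg hN
  rw [← exp_log (show 0 < N by linarith), ← exp_add]
  calc exp (log N + -(0.03 * A)) ≤ exp (-30) := exp_le_exp.2 (by linarith)
    _ ≤ 0.1 := by
      rw [exp_neg, inv_le_comm₀ (exp_pos _) (by norm_num)]
      linarith [add_one_le_exp (30 : ℝ)]

/-- Concentration of the clipped (per-user) scores used in the user-level
pure-DP PAC learner. -/
theorem concen_pac_scores :
    ∃ κ > (0:ℝ),
      ∀ (X : Type) [Fintype X] [Nonempty X],
      ∀ H : Finset (X → Bool), H.Nonempty →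
      ∀ α : ℝ, 0 < α → α ≤ 1 / 2 →
      ∀ n m : ℕ, 1 ≤ n → 1 ≤ m → α * m ≤ 1 →
        κ * (1 + Real.log H.card) ≤ α * n * m →
      ∀ D : X × Bool → ℝ, IsPMF D →
        (0.9 : ℝ) ≤ ∑ z : Fin n → Fin m → X × Bool,
          (∏ i, ∏ j, D (z i j)) *
            (if ∀ h ∈ H,
                (errD D h ≤ 0.01 * α → (scr h z : ℝ) ≤ 0.05 * α * n * m) ∧
                (errD D h > α → (scr h z : ℝ) > 0.1 * α * n * m)
             then 1 else 0) := by
  refine ⟨1000, by norm_num, ?_⟩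
  intro X _ _ H hH α hα _ n m _ _ hαm hκ D hD
  have hsample := (hD.pi m).pi n
  have hunion := sum_sub_sum_sum_mul_ite_not_le_sum_mul_ite_forall H _ hsample.1
    fun h z => (errD D h ≤ 0.01 * α → (scr h z : ℝ) ≤ 0.05 * α * n * m) ∧
      (errD D h > α → (scr h z : ℝ) > 0.1 * α * n * m)
  have hfail := sum_le_card_nsmul H _ _ fun h _ =>
    sum_mul_ite_not_separated_le hD h hα (n := n) hαm
  rw [nsmul_eq_mul] at hfail
  have hcard : (1 : ℝ) ≤ H.card := by exact_mod_cast hH.card_pos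
  linarith [mul_exp_neg_le_one_tenth hcard hκ, hsample.2]
end
end

section
/- Fix n, m, κ ∈ ℕ with 4κ ≤ n, parameters ε̄, δ̄ ≥ 0, and an algorithm A : Z^{(n−4κ)·m} → PMF(O). Let x, x' ∈ Z^{n·m} be user-level neighbors and let r ∈ ℕ with r + 1 ≤ 4κ. If X^r_stable(x') ≠ ∅, then X^{r+1}_stable(x) ≠ ∅. -/
/-!
Let `x, x'` differ only in the block of user `i`, and let `S ∈ X^r_stable(x')`. Any `S'` of
size `r + 1` containing `S ∪ {i}` lies in `X^{r+1}_stable(x)`: every deletion set `T ⊇ S'`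
removes user `i`, so `x_{-T} = x'_{-T}`, and `T ⊇ S` as well, so the indistinguishability
required at `x_{-S'}` is among that already guaranteed at `x'_{-S}`.
-/

open scoped BigOperators Classical

noncomputable section

/-- User-level neighbors: the two inputs agree on all user blocks except possibly one. -/
def UserNeighbor {Z : Type} {n m : ℕ} (x x' : Fin n → Fin m → Z) : Prop :=
  ∃ i, ∀ j, j ≠ i → x j = x' j

/-- Delete the blocks of the users in `T` (assumed of cardinality `k`) from `x`,
keeping the remaining blocks in order. -/
noncomputable def deleteUsers {Z : Type} [Nonempty Z] {n m : ℕ} (k : ℕ)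
    (x : Fin n → Fin m → Z) (T : Finset (Fin n)) : Fin (n - k) → Fin m → Z :=
  if h : T.card = k then
    fun i j => x ((Tᶜ.orderIsoOfFin
      (by rw [Finset.card_compl, h, Fintype.card_fin]) i).1) j
  else fun _ _ => Classical.arbitrary Z

/-- `A` is `(4κ - |S|, ε̄, δ̄)`-local-deletion DP at `x_{-S}`: deleting any further
`4κ - |S|` user blocks of `x_{-S}` (i.e., passing from `S` to any superset `T` of
cardinality `4κ`) yields `(ε̄,δ̄)`-indistinguishable outputs. -/
def LDDPDel {Z O : Type} [Fintype O] [Nonempty Z] {n m : ℕ} (κ : ℕ)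
    (A : (Fin (n - 4 * κ) → Fin m → Z) → O → ℝ) (εb δb : ℝ)
    (x : Fin n → Fin m → Z) (S : Finset (Fin n)) : Prop :=
  ∀ T T' : Finset (Fin n), S ⊆ T → S ⊆ T' → T.card = 4 * κ → T'.card = 4 * κ →
    Indis εb δb (A (deleteUsers (4 * κ) x T)) (A (deleteUsers (4 * κ) x T'))

/-- `X^r_stable(x) = {S ⊆ [n] : |S| = r ∧ A is (4κ - r, ε̄, δ̄)-LDDP at x_{-S}}`. -/
def stableSet {Z O : Type} [Fintype O] [Nonempty Z] {n m : ℕ} (κ : ℕ)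
    (A : (Fin (n - 4 * κ) → Fin m → Z) → O → ℝ) (εb δb : ℝ) (r : ℕ)
    (x : Fin n → Fin m → Z) : Set (Finset (Fin n)) :=
  {S | S.card = r ∧ LDDPDel κ A εb δb x S}

theorem deleteUsers_congr {Z : Type} [Nonempty Z] {n m : ℕ} (k : ℕ)
    {x x' : Fin n → Fin m → Z} {T : Finset (Fin n)} (h : ∀ j ∉ T, x j = x' j) :
    deleteUsers k x T = deleteUsers k x' T := by
  unfold deleteUsers
  split_ifs
  · funext a b
    rw [h _ (Finset.mem_compl.mp (Finset.coe_mem _))]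
  · rfl

namespace LDDPDel

variable {Z O : Type} [Fintype O] [Nonempty Z] {n m κ : ℕ}
  {A : (Fin (n - 4 * κ) → Fin m → Z) → O → ℝ} {εb δb : ℝ} {x x' : Fin n → Fin m → Z}
  {S S' : Finset (Fin n)}

theorem mono (hSS' : S ⊆ S') (hS : LDDPDel κ A εb δb x S) : LDDPDel κ A εb δb x S' :=
  fun T T' hT hT' ↦ hS T T' (hSS'.trans hT) (hSS'.trans hT')

theorem congr (h : ∀ j ∉ S, x j = x' j) (hS : LDDPDel κ A εb δb x' S) :
    LDDPDel κ A εb δb x S := by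
  intro T T' hT hT' hcT hcT'
  rw [deleteUsers_congr _ fun j hj ↦ h j (mt (@hT j) hj),
    deleteUsers_congr _ fun j hj ↦ h j (mt (@hT' j) hj)]
  exact hS T T' hT hT' hcT hcT'

end LDDPDel

theorem Finset.exists_superset_insert_card_eq_succ {α : Type*} [Fintype α] [DecidableEq α]
    (a : α) {s : Finset α} (hs : s.card < Fintype.card α) :
    ∃ t : Finset α, insert a s ⊆ t ∧ t.card = s.card + 1 := by
  obtain ⟨t, hst, -, ht⟩ := Finset.exists_subsuperset_card_eq (subset_univ (insert a s))
    (card_insert_le a s) (by rwa [card_univ])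
  exact ⟨t, hst, ht⟩

theorem stable_set_neighbors_general {Z O : Type} [Fintype O] [Nonempty Z]
    (n m κ : ℕ) (hκn : 4 * κ ≤ n) (εb δb : ℝ)
    (A : (Fin (n - 4 * κ) → Fin m → Z) → O → ℝ)
    (x x' : Fin n → Fin m → Z) (hxx : UserNeighbor x x')
    (r : ℕ) (hr : r + 1 ≤ 4 * κ)
    (hne : (stableSet κ A εb δb r x').Nonempty) :
    (stableSet κ A εb δb (r + 1) x).Nonempty := by
  obtain ⟨i, hi⟩ := hxx
  obtain ⟨S, rfl, hS⟩ := hne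
  have hS_lt : S.card < Fintype.card (Fin n) := by rw [Fintype.card_fin]; omega
  obtain ⟨S', hiSS', hS'⟩ := Finset.exists_superset_insert_card_eq_succ i hS_lt
  have hiS' : i ∈ S' := hiSS' (Finset.mem_insert_self i S)
  have hSS' : S ⊆ S' := (Finset.subset_insert i S).trans hiSS'
  exact ⟨S', hS', (hS.mono hSS').congr fun j hj ↦ hi j (ne_of_mem_of_not_mem hiS' hj).symm⟩

/-- If `x, x'` are user-level neighbors and `X^r_stable(x') ≠ ∅`,
then `X^{r+1}_stable(x) ≠ ∅`. -/
theorem stable_set_neighbors {Z O : Type} [Fintype O] [Nonempty Z]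
    (n m κ : ℕ) (hκn : 4 * κ ≤ n) (εb δb : ℝ) (hεb : 0 ≤ εb) (hδb : 0 ≤ δb)
    (A : (Fin (n - 4 * κ) → Fin m → Z) → O → ℝ)
    (x x' : Fin n → Fin m → Z) (hxx : UserNeighbor x x')
    (r : ℕ) (hr : r + 1 ≤ 4 * κ)
    (hne : (stableSet κ A εb δb r x').Nonempty) :
    (stableSet κ A εb δb (r + 1) x).Nonempty :=
  stable_set_neighbors_general n m κ hκn εb δb A x x' hxx r hr hne
end
end

section
/- For every ε, δ ∈ (0,1), every m ≥ 1, every n ≥ 4κ (where κ = 1 + ⌈ln(1/δ̄)/ε̄⌉ with ε̄ = ε/3 and δ̄ = δ/(e^{2ε̄} + e^{ε̄} + 2)), and every algorithm A : Z^{(n−4κ)·m} → PMF(O), the algorithm DelStab_{ε,δ,A} : Z^{n·m} → PMF(O ∪ {⊥}) is (ε,δ)-user-level DP. -/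
/-!
`DelStab` is a mixture, over the level `R₁ ∼ TDLap`, of conditional outputs that are `⊥` at
levels without a stable set. Changing one user's block moves the first level with a stable set
by at most one, so the levels of `x` and `x'` can be matched by a shift that pairs `⊥`-levels
with `⊥`-levels and stable levels with stable levels. The shift costs `ε̄` through the ratio of
neighboring TDLap weights; a matched pair of stable levels costs `2ε̄` and `δ̄ + e^{ε̄} δ̄`, since
two stable sets and the changed user fit into one deletion set of size `4κ` on which both
inputs agree; the unmatched levels `0` and `2κ` carry TDLap mass at most `e^{-ε̄κ} ≤ δ̄` each.
-/

open scoped BigOperators Classical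

noncomputable section

/-- `X^r_stable(x)` as a finset. -/
noncomputable def stableFinset {Z O : Type} [Fintype O] [Nonempty Z] {n m : ℕ} (κ : ℕ)
    (A : (Fin (n - 4 * κ) → Fin m → Z) → O → ℝ) (εb δb : ℝ) (r : ℕ)
    (x : Fin n → Fin m → Z) : Finset (Finset (Fin n)) :=
  Finset.univ.filter fun S => S.card = r ∧ LDDPDel κ A εb δb x S

/-- The supersets of `S` of cardinality `4κ`. -/
noncomputable def supersets {n : ℕ} (κ : ℕ) (S : Finset (Fin n)) :
    Finset (Finset (Fin n)) :=
  Finset.univ.filter fun T => S ⊆ T ∧ T.card = 4 * κ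

/-- The shifted truncated discrete Laplace distribution `TDLap(ε̄, δ̄)` on
`{0, …, 2κ}`, with mass at `r` proportional to `exp(-ε̄·|r - κ|)`. -/
noncomputable def tdlap (εb : ℝ) (κ : ℕ) (r : ℕ) : ℝ :=
  if r ≤ 2 * κ then
    Real.exp (-(εb * |(r : ℝ) - κ|)) /
      ∑ j ∈ Finset.range (2 * κ + 1), Real.exp (-(εb * |(j : ℝ) - κ|))
  else 0

/-- The `DelStab` algorithm: sample `R₁ ∼ TDLap(ε̄,δ̄)`; if `X^{R₁}_stable(x) = ∅`
output `⊥` (i.e. `none`); otherwise pick `S ∈ X^{R₁}_stable(x)` uniformly, pick a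
uniform superset `T ⊇ S` with `|T| = 4κ`, and output a sample of `A(x_{-T})`. -/
noncomputable def DelStab {Z O : Type} [Fintype Z] [Fintype O] [Nonempty Z] {n m : ℕ}
    (κ : ℕ) (A : (Fin (n - 4 * κ) → Fin m → Z) → O → ℝ) (εb δb : ℝ)
    (x : Fin n → Fin m → Z) : Option O → ℝ := fun out =>
  ∑ r ∈ Finset.range (2 * κ + 1), tdlap εb κ r *
    (if stableFinset κ A εb δb r x = ∅ then (if out = none then 1 else 0)
     else ((stableFinset κ A εb δb r x).card : ℝ)⁻¹ *
       ∑ S ∈ stableFinset κ A εb δb r x,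
         ((supersets κ S).card : ℝ)⁻¹ *
           ∑ T ∈ supersets κ S, out.elim 0 (A (deleteUsers (4 * κ) x T)))

open Finset

section HockeyStick

variable {O : Type} [Fintype O]

lemma hsDiv_mono_right (ε : ℝ) (P : O → ℝ) {Q Q' : O → ℝ} (h : ∀ o, Q o ≤ Q' o) :
    hsDiv ε P Q' ≤ hsDiv ε P Q :=
  sum_le_sum fun o _ => max_le_max_right _ <| by gcongr; exact h o

lemma hsDiv_add_le_s17 (ε : ℝ) (P Q R : O → ℝ) (hR : ∀ o, 0 ≤ R o) :
    hsDiv ε (fun o => P o + R o) Q ≤ hsDiv ε P Q + ∑ o, R o := by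
  rw [hsDiv, hsDiv, ← sum_add_distrib]
  refine sum_le_sum fun o _ => max_le ?_ (add_nonneg (le_max_right _ _) (hR o))
  linarith [le_max_left (P o - Real.exp ε * Q o) 0]

lemma hsDiv_sum_le {ι : Type*} (ε : ℝ) (K : Finset ι) (f g : ι → O → ℝ) :
    hsDiv ε (fun o => ∑ k ∈ K, f k o) (fun o => ∑ k ∈ K, g k o) ≤
      ∑ k ∈ K, hsDiv ε (f k) (g k) := by
  unfold hsDiv
  rw [sum_comm]
  refine sum_le_sum fun o _ => max_le ?_ (sum_nonneg fun k _ => le_max_right _ _)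
  rw [mul_sum, ← sum_sub_distrib]
  exact sum_le_sum fun k _ => le_max_left _ _

lemma hsDiv_const_mul (ε : ℝ) {c : ℝ} (hc : 0 ≤ c) (P Q : O → ℝ) :
    hsDiv ε (fun o => c * P o) (fun o => c * Q o) = c * hsDiv ε P Q := by
  rw [hsDiv, hsDiv, mul_sum]
  refine sum_congr rfl fun o _ => ?_
  rw [mul_max_of_nonneg _ _ hc, mul_zero, mul_sub, mul_left_comm]

lemma hsDiv_self_nonpos {ε : ℝ} (hε : 0 ≤ ε) {P : O → ℝ} (hP : ∀ o, 0 ≤ P o) :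
    hsDiv ε P P ≤ 0 :=
  sum_nonpos fun o _ => max_le (by nlinarith [Real.one_le_exp hε, hP o]) le_rfl

lemma hsDiv_mul_le (ε₁ ε₂ : ℝ) {p q : ℝ} (P Q : O → ℝ) (hp : 0 ≤ p) (hQ : ∀ o, 0 ≤ Q o)
    (hpq : p ≤ Real.exp ε₁ * q) :
    hsDiv (ε₁ + ε₂) (fun o => p * P o) (fun o => q * Q o) ≤ p * hsDiv ε₂ P Q := by
  rw [← hsDiv_const_mul ε₂ hp, hsDiv, hsDiv]
  refine sum_le_sum fun o _ => max_le_max_right _ ?_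
  have : Real.exp ε₂ * (p * Q o) ≤ Real.exp (ε₁ + ε₂) * (q * Q o) := by
    rw [Real.exp_add]
    have := mul_le_mul_of_nonneg_right hpq (hQ o)
    nlinarith [Real.exp_pos ε₂]
  linarith

lemma hsDiv_triangle (ε₁ ε₂ : ℝ) (P Q R : O → ℝ) :
    hsDiv (ε₁ + ε₂) P R ≤ hsDiv ε₁ P Q + Real.exp ε₁ * hsDiv ε₂ Q R := by
  rw [hsDiv, hsDiv, hsDiv, mul_sum, ← sum_add_distrib]
  refine sum_le_sum fun o _ => ?_
  rw [mul_max_of_nonneg _ _ (Real.exp_pos ε₁).le, mul_zero, Real.exp_add]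
  refine max_le ?_ (add_nonneg (le_max_right _ _) (le_max_right _ _))
  linarith [le_max_left (P o - Real.exp ε₁ * Q o) 0,
    le_max_left (Real.exp ε₁ * (Q o - Real.exp ε₂ * R o)) 0]

lemma hsDiv_option_elim (ε : ℝ) (P Q : O → ℝ) :
    hsDiv ε (fun o : Option O => o.elim 0 P) (fun o => o.elim 0 Q) = hsDiv ε P Q := by
  simp [hsDiv, Fintype.sum_option]

lemma inv_card_mul_sum_const {ι : Type*} {K : Finset ι} (hK : K.Nonempty) (a : ℝ) :
    (#K : ℝ)⁻¹ * ∑ _k ∈ K, a = a := by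
  rw [sum_const, nsmul_eq_mul, inv_mul_cancel_left₀ (by exact_mod_cast hK.card_pos.ne')]

lemma hsDiv_average_le {ι : Type*} (ε c : ℝ) {K : Finset ι} (hK : K.Nonempty)
    (F G : ι → O → ℝ) (h : ∀ k ∈ K, hsDiv ε (F k) (G k) ≤ c) :
    hsDiv ε (fun o => (#K : ℝ)⁻¹ * ∑ k ∈ K, F k o) (fun o => (#K : ℝ)⁻¹ * ∑ k ∈ K, G k o)
      ≤ c := by
  calc _ = (#K : ℝ)⁻¹ * hsDiv ε (fun o => ∑ k ∈ K, F k o) (fun o => ∑ k ∈ K, G k o) :=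
        hsDiv_const_mul ε (by positivity) _ _
    _ ≤ (#K : ℝ)⁻¹ * ∑ _k ∈ K, c := by
        gcongr
        exact (hsDiv_sum_le ε K F G).trans (sum_le_sum h)
    _ = c := inv_card_mul_sum_const hK c

lemma hsDiv_average_le_of_forall {ι ι' : Type*} (ε c : ℝ) {K : Finset ι} {L : Finset ι'}
    (hK : K.Nonempty) (hL : L.Nonempty) (F : ι → O → ℝ) (G : ι' → O → ℝ)
    (h : ∀ a ∈ K, ∀ b ∈ L, hsDiv ε (F a) (G b) ≤ c) :
    hsDiv ε (fun o => (#K : ℝ)⁻¹ * ∑ a ∈ K, F a o) (fun o => (#L : ℝ)⁻¹ * ∑ b ∈ L, G b o)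
      ≤ c := by
  rw [← funext fun o => inv_card_mul_sum_const hK ((#L : ℝ)⁻¹ * ∑ b ∈ L, G b o)]
  refine hsDiv_average_le ε c hK _ _ fun a ha => ?_
  rw [← funext fun o => inv_card_mul_sum_const hL (F a o)]
  exact hsDiv_average_le ε c hL _ _ fun b hb => h a ha b hb

lemma hsDiv_sum_le_of_injOn {ι ι' : Type*} [DecidableEq ι] [DecidableEq ι'] (ε : ℝ)
    {K K' : Finset ι} {L : Finset ι'} (hK' : K' ⊆ K) {σ : ι → ι'} (hσ : Set.MapsTo σ K' L)
    (hσinj : Set.InjOn σ K') (P : ι → O → ℝ) (Q : ι' → O → ℝ)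
    (hP : ∀ k ∈ K, ∀ o, 0 ≤ P k o) (hQ : ∀ l ∈ L, ∀ o, 0 ≤ Q l o) :
    hsDiv ε (fun o => ∑ k ∈ K, P k o) (fun o => ∑ l ∈ L, Q l o) ≤
      ∑ k ∈ K', hsDiv ε (P k) (Q (σ k)) + ∑ k ∈ K \ K', ∑ o, P k o := by
  have hQσ : ∀ o, ∑ k ∈ K', Q (σ k) o ≤ ∑ l ∈ L, Q l o := fun o => by
    rw [← sum_image (f := fun k => Q k o) hσinj]
    exact sum_le_sum_of_subset_of_nonneg (image_subset_iff.2 hσ)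
      fun k hk _ => hQ k hk o
  have hsplit : (fun o => ∑ k ∈ K, P k o) =
      fun o => ∑ k ∈ K', P k o + ∑ k ∈ K \ K', P k o :=
    funext fun o => by rw [add_comm, sum_sdiff hK']
  calc _ ≤ hsDiv ε (fun o => ∑ k ∈ K, P k o) (fun o => ∑ k ∈ K', Q (σ k) o) :=
        hsDiv_mono_right ε _ hQσ
    _ ≤ hsDiv ε (fun o => ∑ k ∈ K', P k o) (fun o => ∑ k ∈ K', Q (σ k) o) +
          ∑ o, ∑ k ∈ K \ K', P k o := by
        rw [hsplit]
        exact hsDiv_add_le_s17 ε _ _ _ fun o =>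
          sum_nonneg fun k hk => hP k (sdiff_subset hk) o
    _ ≤ _ := by
        rw [sum_comm (s := univ)]
        gcongr
        exact hsDiv_sum_le ε K' P (fun k => Q (σ k))

end HockeyStick

section TDLap

variable (εb : ℝ) (κ : ℕ)

lemma tdlap_normalizer_pos :
    0 < ∑ j ∈ range (2 * κ + 1), Real.exp (-(εb * |(j : ℝ) - κ|)) :=
  sum_pos (fun _ _ => Real.exp_pos _) nonempty_range_add_one

lemma tdlap_nonneg (r : ℕ) : 0 ≤ tdlap εb κ r := by
  unfold tdlap
  split_ifs
  exacts [div_nonneg (Real.exp_pos _).le (tdlap_normalizer_pos εb κ).le, le_rfl]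

lemma sum_tdlap : ∑ r ∈ range (2 * κ + 1), tdlap εb κ r = 1 := by
  rw [← div_self (tdlap_normalizer_pos εb κ).ne', sum_div]
  exact sum_congr rfl fun r hr => if_pos (Nat.lt_succ_iff.mp (mem_range.mp hr))

/-- The normalizer is at least its central term `1`. -/
lemma tdlap_endpoint_le {r : ℕ} (hr : r = 0 ∨ r = 2 * κ) :
    tdlap εb κ r ≤ Real.exp (-(εb * κ)) := by
  have hcenter : 1 ≤ ∑ j ∈ range (2 * κ + 1), Real.exp (-(εb * |(j : ℝ) - κ|)) := by
    simpa using single_le_sum (f := fun j : ℕ => Real.exp (-(εb * |(j : ℝ) - κ|)))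
      (fun j _ => (Real.exp_pos _).le) (mem_range.mpr (by omega : κ < 2 * κ + 1))
  have hdist : |(r : ℝ) - κ| = κ := by
    rcases hr with rfl | rfl <;> push_cast <;> ring_nf <;> simp
  rw [tdlap, if_pos (by omega), hdist]
  exact div_le_self (Real.exp_pos _).le hcenter

lemma tdlap_le_exp_mul (hεb : 0 ≤ εb) {r s : ℕ} (hr : r ≤ 2 * κ) (hs : s ≤ 2 * κ)
    (hrs : r ≤ s + 1) (hsr : s ≤ r + 1) : tdlap εb κ r ≤ Real.exp εb * tdlap εb κ s := by
  rw [tdlap, tdlap, if_pos hr, if_pos hs, ← mul_div_assoc, ← Real.exp_add]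
  gcongr
  have hdist : |(s : ℝ) - κ| - |(r : ℝ) - κ| ≤ 1 := by
    refine (abs_sub_abs_le_abs_sub _ _).trans (abs_le.mpr ⟨?_, ?_⟩) <;>
      · have : (r : ℝ) ≤ s + 1 := by exact_mod_cast hrs
        have : (s : ℝ) ≤ r + 1 := by exact_mod_cast hsr
        linarith
  nlinarith

end TDLap

lemma exists_threshold {P : ℕ → Prop} (L : ℕ) (hP : ∀ r < L, P r → P (r + 1)) :
    ∃ t ≤ L + 1, ∀ r ≤ L, P r ↔ t ≤ r := by
  have hex : ∃ t, L < t ∨ P t := ⟨L + 1, Or.inl (Nat.lt_succ_self L)⟩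
  refine ⟨Nat.find hex, Nat.find_min' hex (Or.inl (Nat.lt_succ_self L)), fun r hr => ?_⟩
  refine ⟨fun h => Nat.find_min' hex (Or.inr h), fun h => ?_⟩
  obtain ⟨t, ht, hPt⟩ : ∃ t ≤ r, P t := by
    rcases Nat.find_spec hex with h' | h'
    · omega
    · exact ⟨_, h, h'⟩
  clear h
  induction r, ht using Nat.le_induction with
  | base => exact hPt
  | succ r htr ih => exact hP r (by omega) (ih (by omega))

lemma exists_thresholds_of_step {P P' : ℕ → Prop} (L : ℕ) (hP : ∀ r < L, P r → P (r + 1))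
    (hP' : ∀ r < L, P' r → P' (r + 1)) (hPP' : ∀ r < L, P r → P' (r + 1))
    (hP'P : ∀ r < L, P' r → P (r + 1)) :
    ∃ t t', t ≤ t' + 1 ∧ t' ≤ t + 1 ∧ (∀ r ≤ L, P r ↔ t ≤ r) ∧ (∀ r ≤ L, P' r ↔ t' ≤ r) := by
  obtain ⟨t, ht, hPt⟩ := exists_threshold L hP
  obtain ⟨t', ht', hP't'⟩ := exists_threshold L hP'
  refine ⟨t, t', ?_, ?_, hPt, hP't'⟩
  · rcases lt_or_ge t' L with h | h
    · exact (hPt (t' + 1) h).mp (hP'P t' h ((hP't' t' h.le).mpr le_rfl))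
    · omega
  · rcases lt_or_ge t L with h | h
    · exact (hP't' (t + 1) h).mp (hPP' t h ((hPt t h.le).mpr le_rfl))
    · omega

section DelStab

variable {Z O : Type} [Fintype O] [Nonempty Z] {n m κ : ℕ}
  {A : (Fin (n - 4 * κ) → Fin m → Z) → O → ℝ} {εb δb : ℝ} {x x' : Fin n → Fin m → Z} {i : Fin n}

lemma deleteUsers_eq_of_mem (k : ℕ) (hi : ∀ j, j ≠ i → x j = x' j) {T : Finset (Fin n)}
    (hiT : i ∈ T) : deleteUsers k x T = deleteUsers k x' T := by
  unfold deleteUsers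
  split_ifs with h
  · funext a b
    refine congrFun (hi _ fun he => ?_) b
    have hmem := (Tᶜ.orderIsoOfFin (by rw [card_compl, h, Fintype.card_fin]) a).2
    rw [he] at hmem
    exact mem_compl.mp hmem hiT
  · rfl

lemma LDDPDel.mono_s17 {S S' : Finset (Fin n)} (hS : S ⊆ S') (h : LDDPDel κ A εb δb x S) :
    LDDPDel κ A εb δb x S' :=
  fun T T' hT hT' => h T T' (hS.trans hT) (hS.trans hT')

lemma LDDPDel.of_eq_of_mem (hi : ∀ j, j ≠ i → x j = x' j) {S : Finset (Fin n)} (hiS : i ∈ S)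
    (h : LDDPDel κ A εb δb x S) : LDDPDel κ A εb δb x' S := by
  intro T T' hT hT' hTc hT'c
  rw [← deleteUsers_eq_of_mem _ hi (hT hiS), ← deleteUsers_eq_of_mem _ hi (hT' hiS)]
  exact h T T' hT hT' hTc hT'c

@[simp]
lemma mem_stableFinset {r : ℕ} {S : Finset (Fin n)} :
    S ∈ stableFinset κ A εb δb r x ↔ S.card = r ∧ LDDPDel κ A εb δb x S := by
  simp [stableFinset]

@[simp]
lemma mem_supersets {S T : Finset (Fin n)} : T ∈ supersets κ S ↔ S ⊆ T ∧ T.card = 4 * κ := by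
  simp [supersets]

lemma supersets_nonempty (hn : 4 * κ ≤ n) {S : Finset (Fin n)} (hS : S.card ≤ 4 * κ) :
    (supersets κ S).Nonempty := by
  obtain ⟨T, hST, hT⟩ := exists_superset_card_eq hS (by rwa [Fintype.card_fin])
  exact ⟨T, mem_supersets.mpr ⟨hST, hT⟩⟩

/-- Enlarge a stable set of `x` by the user `i` and pad it to size `r + 1`. -/
lemma stableFinset_succ_nonempty (hi : ∀ j, j ≠ i → x j = x' j) {r : ℕ} (hr : r < n)
    (h : (stableFinset κ A εb δb r x).Nonempty) :
    (stableFinset κ A εb δb (r + 1) x').Nonempty := by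
  obtain ⟨S, hS⟩ := h
  rw [mem_stableFinset] at hS
  have hcard : (insert i S).card ≤ r + 1 := hS.1 ▸ card_insert_le i S
  obtain ⟨S', hiS', hS'⟩ := exists_superset_card_eq hcard (by rw [Fintype.card_fin]; omega)
  refine ⟨S', mem_stableFinset.mpr ⟨hS', ?_⟩⟩
  exact (hS.2.mono_s17 ((subset_insert i S).trans hiS')).of_eq_of_mem hi (hiS' (mem_insert_self i S))

/-- Compare both sides with `A (x_{-T₀})` for a set `T₀ ⊇ S ∪ S' ∪ {i}` of size `4κ`, on which
`x` and `x'` agree. -/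
lemma hsDiv_deleteUsers_le (hn : 4 * κ ≤ n) (hi : ∀ j, j ≠ i → x j = x' j)
    {S S' T T' : Finset (Fin n)} (hS : LDDPDel κ A εb δb x S) (hS' : LDDPDel κ A εb δb x' S')
    (hcard : S.card + S'.card < 4 * κ) (hT : T ∈ supersets κ S) (hT' : T' ∈ supersets κ S') :
    hsDiv (εb + εb) (A (deleteUsers (4 * κ) x T)) (A (deleteUsers (4 * κ) x' T')) ≤
      δb + Real.exp εb * δb := by
  rw [mem_supersets] at hT hT'
  have hU : (S ∪ S' ∪ {i}).card ≤ 4 * κ := by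
    have := card_union_le (S ∪ S') {i}
    have := card_union_le S S'
    rw [card_singleton] at *
    omega
  obtain ⟨T₀, hT₀, hT₀card⟩ := exists_superset_card_eq hU (by rwa [Fintype.card_fin])
  have hST₀ : S ⊆ T₀ := fun a ha => hT₀ (by simp [ha])
  have hS'T₀ : S' ⊆ T₀ := fun a ha => hT₀ (by simp [ha])
  have hiT₀ : i ∈ T₀ := hT₀ (by simp)
  refine (hsDiv_triangle εb εb _ (A (deleteUsers (4 * κ) x T₀)) _).trans ?_
  gcongr
  · exact (hS T T₀ hT.1 hST₀ hT.2 hT₀card).1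
  · rw [deleteUsers_eq_of_mem _ hi hiT₀]
    exact (hS' T₀ T' hS'T₀ hT'.1 hT₀card hT'.2).1

/-- The output distribution of `DelStab` conditioned on `R₁ = r`. -/
def delStabCond (κ : ℕ) (A : (Fin (n - 4 * κ) → Fin m → Z) → O → ℝ) (εb δb : ℝ)
    (x : Fin n → Fin m → Z) (r : ℕ) : Option O → ℝ := fun out =>
  if stableFinset κ A εb δb r x = ∅ then (if out = none then 1 else 0)
  else ((stableFinset κ A εb δb r x).card : ℝ)⁻¹ *
    ∑ S ∈ stableFinset κ A εb δb r x,
      ((supersets κ S).card : ℝ)⁻¹ *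
        ∑ T ∈ supersets κ S, out.elim 0 (A (deleteUsers (4 * κ) x T))

lemma DelStab_eq_sum_delStabCond [Fintype Z] :
    DelStab κ A εb δb x =
      fun out => ∑ r ∈ range (2 * κ + 1), tdlap εb κ r * delStabCond κ A εb δb x r out :=
  rfl

lemma delStabCond_nonneg (hA : ∀ y, IsPMF (A y)) (r : ℕ) (out : Option O) :
    0 ≤ delStabCond κ A εb δb x r out := by
  unfold delStabCond
  split_ifs
  · exact zero_le_one
  · exact le_rfl
  · refine mul_nonneg (by positivity) (sum_nonneg fun S _ => ?_)
    refine mul_nonneg (by positivity) (sum_nonneg fun T _ => ?_)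
    cases out
    exacts [le_rfl, (hA _).1 _]

lemma sum_average_le_one {ι : Type*} (K : Finset ι) (F : ι → O → ℝ)
    (h : ∀ k ∈ K, ∑ o, F k o ≤ 1) : ∑ o, (#K : ℝ)⁻¹ * ∑ k ∈ K, F k o ≤ 1 := by
  rw [← mul_sum, sum_comm]
  calc (#K : ℝ)⁻¹ * ∑ k ∈ K, ∑ o, F k o ≤ (#K : ℝ)⁻¹ * ∑ _k ∈ K, 1 := by gcongr; exact h _ ‹_›
    _ ≤ 1 := by
      rw [sum_const, nsmul_one]
      exact inv_mul_le_one_of_le₀ le_rfl (Nat.cast_nonneg _)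

lemma sum_delStabCond_le_one (hA : ∀ y, IsPMF (A y)) (r : ℕ) :
    ∑ out, delStabCond κ A εb δb x r out ≤ 1 := by
  unfold delStabCond
  split_ifs
  · simp
  · refine sum_average_le_one _ _ fun S _ => sum_average_le_one _ _ fun T _ => ?_
    simp [Fintype.sum_option, (hA _).2]

lemma hsDiv_delStabCond_le (hn : 4 * κ ≤ n) (hi : ∀ j, j ≠ i → x j = x' j)
    (hεb : 0 ≤ εb) (hδb : 0 ≤ δb) {r s : ℕ} (hrs : r + s < 4 * κ)
    (hne : (stableFinset κ A εb δb r x).Nonempty ↔ (stableFinset κ A εb δb s x').Nonempty) :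
    hsDiv (εb + εb) (delStabCond κ A εb δb x r) (delStabCond κ A εb δb x' s) ≤
      δb + Real.exp εb * δb := by
  by_cases h : (stableFinset κ A εb δb r x).Nonempty
  · have h' := hne.mp h
    unfold delStabCond
    simp only [if_neg h.ne_empty, if_neg h'.ne_empty]
    refine hsDiv_average_le_of_forall _ _ h h' _ _ fun S hS S' hS' => ?_
    rw [mem_stableFinset] at hS hS'
    have hcard : S.card + S'.card < 4 * κ := by omega
    refine hsDiv_average_le_of_forall _ _ (supersets_nonempty hn (by omega))
      (supersets_nonempty hn (by omega)) _ _ fun T hT T' hT' => ?_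
    rw [hsDiv_option_elim]
    exact hsDiv_deleteUsers_le hn hi hS.2 hS'.2 hcard hT hT'
  · have h' : ¬(stableFinset κ A εb δb s x').Nonempty := hne.not.mp h
    rw [not_nonempty_iff_eq_empty] at h h'
    have hbot : ∀ y t, stableFinset κ A εb δb t y = ∅ →
        delStabCond κ A εb δb y t = fun out => if out = none then 1 else 0 :=
      fun y t ht => funext fun out => if_pos ht
    rw [hbot x r h, hbot x' s h']
    refine (hsDiv_self_nonpos (by positivity) fun out => ?_).trans (by positivity)
    split_ifs <;> norm_num

lemma hsDiv_tdlap_mul_delStabCond_le (hn : 4 * κ ≤ n) (hi : ∀ j, j ≠ i → x j = x' j)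
    (hA : ∀ y, IsPMF (A y)) (hεb : 0 ≤ εb) (hδb : 0 ≤ δb) {r s : ℕ} (hr : r ≤ 2 * κ)
    (hs : s ≤ 2 * κ) (hrs : r ≤ s + 1) (hsr : s ≤ r + 1) (hrs4 : r + s < 4 * κ)
    (hne : (stableFinset κ A εb δb r x).Nonempty ↔ (stableFinset κ A εb δb s x').Nonempty) :
    hsDiv (εb + (εb + εb)) (fun out => tdlap εb κ r * delStabCond κ A εb δb x r out)
      (fun out => tdlap εb κ s * delStabCond κ A εb δb x' s out) ≤
        tdlap εb κ r * (δb + Real.exp εb * δb) :=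
  (hsDiv_mul_le _ _ _ _ (tdlap_nonneg εb κ r) (delStabCond_nonneg hA s)
    (tdlap_le_exp_mul εb κ hεb hr hs hrs hsr)).trans <|
    mul_le_mul_of_nonneg_left (hsDiv_delStabCond_le hn hi hεb hδb hrs4 hne) (tdlap_nonneg εb κ r)

lemma sum_tdlap_mul_delStabCond_le (hA : ∀ y, IsPMF (A y)) (r : ℕ) :
    ∑ out, tdlap εb κ r * delStabCond κ A εb δb x r out ≤ tdlap εb κ r := by
  rw [← mul_sum]
  exact mul_le_of_le_one_right (tdlap_nonneg εb κ r) (sum_delStabCond_le_one hA r)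

lemma hsDiv_DelStab_le [Fintype Z] (hn : 4 * κ ≤ n) (hi : ∀ j, j ≠ i → x j = x' j)
    (hA : ∀ y, IsPMF (A y)) (hεb : 0 ≤ εb) (hδb : 0 ≤ δb)
    (htail : Real.exp (-(εb * κ)) ≤ δb) :
    hsDiv (εb + (εb + εb)) (DelStab κ A εb δb x) (DelStab κ A εb δb x') ≤
      δb + Real.exp εb * δb + 2 * δb := by
  obtain ⟨t, t', htt', ht't, hxt, hx't'⟩ := exists_thresholds_of_step
    (P := fun r => (stableFinset κ A εb δb r x).Nonempty)
    (P' := fun r => (stableFinset κ A εb δb r x').Nonempty) (2 * κ)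
    (fun r hr => stableFinset_succ_nonempty (i := i) (fun _ _ => rfl) (by omega))
    (fun r hr => stableFinset_succ_nonempty (i := i) (fun _ _ => rfl) (by omega))
    (fun r hr => stableFinset_succ_nonempty hi (by omega))
    (fun r hr => stableFinset_succ_nonempty (fun j hj => (hi j hj).symm) (by omega))
  -- Shifting levels by `t' - t` aligns the thresholds; the top level is left unmatched so
  -- that matched levels satisfy `r + σ r < 4κ`.
  set σ : ℕ → ℕ := fun r => r + t' - t
  set K' := (range (2 * κ)).filter fun r => t ≤ r + t' ∧ r + t' - t ≤ 2 * κ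
  have hK' : K' ⊆ range (2 * κ + 1) := fun r hr => by
    simp only [K', mem_filter, mem_range] at hr ⊢; omega
  have hσ : Set.MapsTo σ K' (range (2 * κ + 1)) := fun r hr => by
    simp only [K', σ, mem_coe, mem_filter, mem_range] at hr ⊢; omega
  have hσinj : Set.InjOn σ K' := fun a ha b hb hab => by
    simp only [K', σ, mem_coe, mem_filter, mem_range] at ha hb hab; omega
  have hunmatched : ∀ r ∈ range (2 * κ + 1) \ K', r = 0 ∨ r = 2 * κ := fun r hr => by
    simp only [K', mem_sdiff, mem_filter, mem_range] at hr; omega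
  have hpos : ∀ r ∈ range (2 * κ + 1), ∀ out, 0 ≤ tdlap εb κ r * delStabCond κ A εb δb x r out :=
    fun r _ out => mul_nonneg (tdlap_nonneg εb κ r) (delStabCond_nonneg hA r out)
  have hpos' : ∀ r ∈ range (2 * κ + 1), ∀ out,
      0 ≤ tdlap εb κ r * delStabCond κ A εb δb x' r out :=
    fun r _ out => mul_nonneg (tdlap_nonneg εb κ r) (delStabCond_nonneg hA r out)
  rw [DelStab_eq_sum_delStabCond, DelStab_eq_sum_delStabCond]
  refine (hsDiv_sum_le_of_injOn _ hK' hσ hσinj _ _ hpos hpos').trans ?_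
  calc _ ≤ ∑ r ∈ K', tdlap εb κ r * (δb + Real.exp εb * δb) +
        ∑ _r ∈ range (2 * κ + 1) \ K', δb := by
        gcongr with r hr r hr
        · simp only [K', σ, mem_filter, mem_range] at hr ⊢
          refine hsDiv_tdlap_mul_delStabCond_le hn hi hA hεb hδb (by omega) (by omega)
            (by omega) (by omega) (by omega) ?_
          rw [hxt r (by omega), hx't' _ (by omega)]
          omega
        · exact (sum_tdlap_mul_delStabCond_le hA r).trans
            ((tdlap_endpoint_le εb κ (hunmatched r hr)).trans htail)
    _ ≤ ∑ r ∈ range (2 * κ + 1), tdlap εb κ r * (δb + Real.exp εb * δb) + 2 * δb := by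
        gcongr
        · exact fun r _ _ => mul_nonneg (tdlap_nonneg εb κ r) (by positivity)
        · rw [sum_const, nsmul_eq_mul]
          gcongr
          exact_mod_cast (card_le_card fun r hr => by simpa using hunmatched r hr).trans
            card_le_two
    _ = _ := by rw [← sum_mul, sum_tdlap, one_mul]

end DelStab

lemma exp_neg_le_of_log_inv_le {a b : ℝ} (hb : 0 < b) (h : Real.log (1 / b) ≤ a) :
    Real.exp (-a) ≤ b := by
  calc Real.exp (-a) ≤ Real.exp (-Real.log (1 / b)) := Real.exp_le_exp.mpr (neg_le_neg h)
    _ = b := by rw [one_div, Real.log_inv, neg_neg, Real.exp_log hb]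

theorem delstab_user_level_dp_general (Z O : Type) [Fintype Z] [Nonempty Z] [Fintype O]
    (ε δ : ℝ) (hε0 : 0 < ε) (hδ0 : 0 < δ)
    (εb δb : ℝ) (κ : ℕ)
    (hεb : εb = ε / 3)
    (hδb : δb = δ / (Real.exp (2 * εb) + Real.exp εb + 2))
    (hκ : κ = 1 + Nat.ceil (Real.log (1 / δb) / εb))
    (m n : ℕ) (hn : 4 * κ ≤ n)
    (A : (Fin (n - 4 * κ) → Fin m → Z) → O → ℝ) (hA : ∀ y, IsPMF (A y))
    (x x' : Fin n → Fin m → Z) (hxx : UserNeighbor x x') :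
    Indis ε δ (DelStab κ A εb δb x) (DelStab κ A εb δb x') := by
  obtain ⟨i, hi⟩ := hxx
  have hεb0 : 0 < εb := by rw [hεb]; positivity
  have hδb0 : 0 < δb := by rw [hδb]; positivity
  have htail : Real.exp (-(εb * κ)) ≤ δb := by
    refine exp_neg_le_of_log_inv_le hδb0 ((div_le_iff₀' hεb0).mp ?_)
    rw [hκ]
    push_cast
    linarith [Nat.le_ceil (Real.log (1 / δb) / εb)]
  have hδ : δb + Real.exp εb * δb + 2 * δb ≤ δ := by
    have hδ_eq : δb * (Real.exp (2 * εb) + Real.exp εb + 2) = δ := by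
      rw [hδb]; field_simp
    nlinarith [Real.one_le_exp (by positivity : 0 ≤ 2 * εb)]
  rw [show ε = εb + (εb + εb) by rw [hεb]; ring]
  exact ⟨(hsDiv_DelStab_le hn hi hA hεb0.le hδb0.le htail).trans hδ,
    (hsDiv_DelStab_le hn (fun j hj => (hi j hj).symm) hA hεb0.le hδb0.le htail).trans hδ⟩

/-- Privacy guarantee: `DelStab_{ε,δ,A}` is `(ε,δ)`-user-level DP. -/
theorem delstab_user_level_dp (Z O : Type) [Fintype Z] [Nonempty Z] [Fintype O]
    (ε δ : ℝ) (hε0 : 0 < ε) (hε1 : ε < 1) (hδ0 : 0 < δ) (hδ1 : δ < 1)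
    (εb δb : ℝ) (κ : ℕ)
    (hεb : εb = ε / 3)
    (hδb : δb = δ / (Real.exp (2 * εb) + Real.exp εb + 2))
    (hκ : κ = 1 + Nat.ceil (Real.log (1 / δb) / εb))
    (m n : ℕ) (hm : 1 ≤ m) (hn : 4 * κ ≤ n)
    (A : (Fin (n - 4 * κ) → Fin m → Z) → O → ℝ) (hA : ∀ y, IsPMF (A y))
    (x x' : Fin n → Fin m → Z) (hxx : UserNeighbor x x') :
    Indis ε δ (DelStab κ A εb δb x) (DelStab κ A εb δb x') :=
  delstab_user_level_dp_general Z O ε δ hε0 hδ0 εb δb κ hεb hδb hκ m n hn A hA x x' hxx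
end
end
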